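/- arXiv:1806.05642 — 4 statements merged into one kernel-verified Lean document; each statement's English description precedes it below -/
import Mathlib

section
/- Let c ≥ 1 be a real number and, for every n ≥ 0, let S_n be the grid graph on vertex set [-⌈cn⌉, ⌈cn⌉]² ⊆ ℤ². Then there exists an activator sequence v = (v_n)_{n≥0} such that the burning density δ(S, v) exists and equals 1. -/
open Filter Topology

namespace Burning

/-- Points of the `d`-dimensional integer lattice. -/
abbrev Pt (d : ℕ) := Fin d → ℤ

/-- The `L1`-distance between two lattice points. -/
def dist1 {d : ℕ} (x y : Pt d) : ℤ := ∑ i, |x i - y i|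

/-- The `L1`-norm of a lattice point. -/
def norm1 {d : ℕ} (x : Pt d) : ℤ := ∑ i, |x i|

/-- The closed neighbourhood of the set `B` in the grid graph on the vertex set `Vn`
(two vertices adjacent iff at `L1`-distance `1`). -/
def nbhd {d : ℕ} (Vn : Set (Pt d)) (B : Set (Pt d)) : Set (Pt d) :=
  B ∪ {x | x ∈ Vn ∧ ∃ b ∈ B, dist1 x b = 1}

/-- The burned sets of the activator sequence `v` in the sequence of grid graphs on the
vertex sets `V n`; `v n = none` means no vertex is activated at time `n` (the symbol `•`). -/
def burnSet {d : ℕ} (V : ℕ → Set (Pt d)) (v : ℕ → Option (Pt d)) : ℕ → Set (Pt d)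
  | 0 => (v 0).elim ∅ (fun x => {x})
  | n + 1 => nbhd (V (n + 1)) (burnSet V v n) ∪ (v (n + 1)).elim ∅ (fun x => {x})

/-- `v` is an activator sequence for the vertex sets `V`: every activated vertex is a
vertex of the current graph. -/
def IsActivator {d : ℕ} (V : ℕ → Set (Pt d)) (v : ℕ → Option (Pt d)) : Prop :=
  ∀ n x, v n = some x → x ∈ V n

/-- `v` is a valid activator sequence: each newly activated vertex lies in the current
vertex set and is not already burned at the current step. -/
def IsValid {d : ℕ} (V : ℕ → Set (Pt d)) (v : ℕ → Option (Pt d)) : Prop :=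
  ∀ n x, v (n + 1) = some x →
    x ∈ V (n + 1) ∧ x ∉ nbhd (V (n + 1)) (burnSet V v n)

/-- The proportion of burned vertices at time `n`. -/
noncomputable def densitySeq {d : ℕ} (V : ℕ → Set (Pt d)) (v : ℕ → Option (Pt d))
    (n : ℕ) : ℝ :=
  ((burnSet V v n).ncard : ℝ) / ((V n).ncard : ℝ)

/-- The closed `L1`-ball of radius `r` centred at `P`. -/
def ball1 {d : ℕ} (P : Pt d) (r : ℤ) : Set (Pt d) := {x | norm1 (x - P) ≤ r}

/-- The `L1`-sphere of radius `r` centred at `P`. -/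
def sphere1 {d : ℕ} (P : Pt d) (r : ℤ) : Set (Pt d) := {x | norm1 (x - P) = r}

/-- The square grid `[-a, a]² ⊆ ℤ²`. -/
def sqGrid (a : ℤ) : Set (Pt 2) := {x | ∀ i, |x i| ≤ a}

/-- The cube grid `[-a, a]^d ⊆ ℤ^d`. -/
def cubeGrid (d : ℕ) (a : ℤ) : Set (Pt d) := {x | ∀ i, |x i| ≤ a}

/-- The quadrant grid `[0, a]² ⊆ ℤ²`. -/
def quadGrid (a : ℤ) : Set (Pt 2) := {x | ∀ i, 0 ≤ x i ∧ x i ≤ a}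

end Burning

/- ### Auxiliary development -/

namespace Burning
-- basic lemmas
lemma sqGrid_mono {a b : ℤ} (h : a ≤ b) : sqGrid a ⊆ sqGrid b :=
  fun x hx i => (hx i).trans h

lemma sqGrid_eq_pi (a : ℤ) :
    sqGrid a = ↑(Fintype.piFinset (fun _ : Fin 2 => Finset.Icc (-a) a)) := by
  rw [Fintype.coe_piFinset]
  ext x
  simp only [sqGrid, Set.mem_pi, Set.mem_setOf_eq, Set.mem_univ, forall_true_left,
    Finset.coe_Icc, Set.mem_Icc, abs_le, forall_const]

lemma sqGrid_finite (a : ℤ) : (sqGrid a).Finite := by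
  rw [sqGrid_eq_pi]; exact (Fintype.piFinset _).finite_toSet

lemma sqGrid_ncard (a : ℤ) (ha : 0 ≤ a) :
    ((sqGrid a).ncard : ℝ) = ((2*a+1 : ℤ) : ℝ)^2 := by
  rw [sqGrid_eq_pi, Set.ncard_coe_finset, Fintype.card_piFinset]
  simp only [Int.card_Icc]
  have h1 : (a + 1 - -a) = 2*a+1 := by ring
  rw [h1]
  have h2 : ((2*a+1).toNat : ℤ) = 2*a+1 := Int.toNat_of_nonneg (by omega)
  rw [Finset.prod_const]
  rw [Nat.cast_pow]
  rw [show (((2*a+1).toNat : ℝ)) = ((2*a+1 : ℤ) : ℝ) by exact_mod_cast congrArg (Int.cast : ℤ → ℝ) h2]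
  norm_num

end Burning

section Ceil
variable (c : ℝ) (hc : 1 ≤ c)

include hc in
lemma ceil_nonneg' (n : ℕ) : (0:ℤ) ≤ ⌈c * n⌉ := by
  have : (0:ℝ) ≤ c * n := mul_nonneg (by linarith) (Nat.cast_nonneg n)
  exact_mod_cast Int.ceil_nonneg this

include hc in
lemma ceil_step (n : ℕ) : ⌈c * n⌉ + 1 ≤ ⌈c * (n+1 : ℕ)⌉ := by
  have h : c * n + 1 ≤ c * (n+1 : ℕ) := by
    push_cast; nlinarith
  calc ⌈c * n⌉ + 1 = ⌈c * n + (1:ℤ)⌉ := by rw [Int.ceil_add_intCast]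
    _ ≤ ⌈c * (n+1 : ℕ)⌉ := Int.ceil_le_ceil (by exact_mod_cast h)

include hc in
lemma ceil_add_le (t u : ℕ) : ⌈c * t⌉ + u ≤ ⌈c * (t + u : ℕ)⌉ := by
  induction u with
  | zero => simp
  | succ u ih =>
    have h1 := ceil_step c hc (t + u)
    have h2 : t + (u + 1) = (t + u) + 1 := by omega
    rw [h2]
    push_cast at h1 ih ⊢
    omega

include hc in
lemma ceil_mono' {m n : ℕ} (h : m ≤ n) : ⌈c * m⌉ ≤ ⌈c * n⌉ := by
  apply Int.ceil_le_ceil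
  have : (0:ℝ) ≤ c := by linarith
  exact mul_le_mul_of_nonneg_left (by exact_mod_cast h) this

end Ceil

namespace Burning
variable {c : ℝ} {V : ℕ → Set (Pt 2)} {v : ℕ → Option (Pt 2)}

lemma burnSet_subset_nbhd (n : ℕ) : burnSet V v n ⊆ burnSet V v (n+1) := by
  intro x hx
  exact Or.inl (Or.inl hx)

lemma burnSet_mono {m n : ℕ} (h : m ≤ n) : burnSet V v m ⊆ burnSet V v n := by
  induction n with
  | zero =>
    have : m = 0 := by omega
    subst this; exact subset_rfl
  | succ n ih =>
    rcases Nat.lt_or_ge m (n+1) with h'|h'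
    · exact (ih (by omega)).trans (burnSet_subset_nbhd n)
    · have : m = n+1 := by omega
      subst this; exact subset_rfl

lemma burnSet_subset_V (hact : IsActivator V v) (hmono : ∀ m n, m ≤ n → V m ⊆ V n)
    (n : ℕ) : burnSet V v n ⊆ V n := by
  induction n with
  | zero =>
    cases h : v 0 with
    | none => simp [burnSet, h]
    | some x =>
      simp only [burnSet, h, Option.elim]
      exact Set.singleton_subset_iff.mpr (hact 0 x h)
  | succ n ih =>
    intro x hx
    rcases hx with hx | hx
    · rcases hx with hx | hx
      · exact hmono n (n+1) (by omega) (ih hx)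
      · exact hx.1
    · cases h : v (n+1) with
      | none => simp [h] at hx
      | some y =>
        simp [h] at hx
        subst hx; exact hact (n+1) x h
end Burning

namespace Burning

lemma norm1_two (z : Pt 2) : norm1 z = |z 0| + |z 1| := by
  simp [norm1, Fin.sum_univ_two]

lemma dist1_two (x y : Pt 2) : dist1 x y = |x 0 - y 0| + |x 1 - y 1| := by
  simp [dist1, Fin.sum_univ_two]

lemma move_one {a : ℤ} (ha : a ≠ 0) : ∃ a', |a'| = |a| - 1 ∧ |a - a'| = 1 := by
  rcases lt_or_gt_of_ne ha with h | h
  · refine ⟨a + 1, ?_, ?_⟩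
    · have e1 : |a+1| = -(a+1) := abs_of_nonpos (by omega)
      have e2 : |a| = -a := abs_of_neg h
      omega
    · have : a - (a+1) = -1 := by ring
      rw [this]; simp
  · refine ⟨a - 1, ?_, ?_⟩
    · have e1 : |a-1| = a-1 := abs_of_nonneg (by omega)
      have e2 : |a| = a := abs_of_pos h
      omega
    · have : a - (a-1) = 1 := by ring
      rw [this]; simp

lemma step_closer {x p : Pt 2} {s : ℤ} (h : norm1 (x - p) = s + 1) (hs : 0 ≤ s) :
    ∃ b : Pt 2, dist1 x b = 1 ∧ norm1 (b - p) = s := by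
  rw [norm1_two] at h
  simp only [Pi.sub_apply] at h
  by_cases h0 : x 0 - p 0 = 0
  · have h1 : x 1 - p 1 ≠ 0 := by
      intro hh; rw [h0, hh] at h; simp at h; omega
    obtain ⟨a', ha1, ha2⟩ := move_one h1
    refine ⟨![x 0, p 1 + a'], ?_, ?_⟩
    · rw [dist1_two]
      simp only [Matrix.cons_val_zero, Matrix.cons_val_one, Matrix.head_cons]
      rw [show x 1 - (p 1 + a') = (x 1 - p 1) - a' by ring]
      simp [ha2]
    · rw [norm1_two]
      simp only [Pi.sub_apply, Matrix.cons_val_zero, Matrix.cons_val_one, Matrix.head_cons]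
      rw [show p 1 + a' - p 1 = a' by ring, ha1, h0]
      rw [h0] at h
      simp only [abs_zero] at h ⊢
      omega
  · obtain ⟨a', ha1, ha2⟩ := move_one h0
    refine ⟨![p 0 + a', x 1], ?_, ?_⟩
    · rw [dist1_two]
      simp only [Matrix.cons_val_zero, Matrix.cons_val_one, Matrix.head_cons]
      rw [show x 0 - (p 0 + a') = (x 0 - p 0) - a' by ring]
      simp [ha2]
    · rw [norm1_two]
      simp only [Pi.sub_apply, Matrix.cons_val_zero, Matrix.cons_val_one, Matrix.head_cons]
      rw [show p 0 + a' - p 0 = a' by ring, ha1]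
      have h' : 0 < |x 0 - p 0| := abs_pos.mpr h0
      omega

lemma norm1_nonneg (z : Pt 2) : 0 ≤ norm1 z := by
  rw [norm1_two]; positivity

lemma norm1_eq_zero {z : Pt 2} (h : norm1 z ≤ 0) : z = 0 := by
  rw [norm1_two] at h
  have a0 := abs_nonneg (z 0); have a1 := abs_nonneg (z 1)
  have h0 : z 0 = 0 := abs_eq_zero.mp (by omega)
  have h1 : z 1 = 0 := abs_eq_zero.mp (by omega)
  funext i
  fin_cases i <;> simpa

variable {c : ℝ} {V : ℕ → Set (Pt 2)} {v : ℕ → Option (Pt 2)}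

lemma mem_burnSet_self {t : ℕ} {p : Pt 2} (hp : v t = some p) :
    p ∈ burnSet V v t := by
  cases t with
  | zero => simp [burnSet, hp]
  | succ n => exact Or.inr (by simp [hp])

lemma fire_spread (hc : 1 ≤ c) (hV : ∀ n : ℕ, V n = sqGrid ⌈c * n⌉)
    (hact : IsActivator V v) {t : ℕ} {p : Pt 2} (hp : v t = some p) :
    ∀ (s : ℕ) (x : Pt 2), norm1 (x - p) ≤ s → x ∈ burnSet V v (t + s) := by
  have hpV : ∀ j, |p j| ≤ ⌈c * t⌉ := by
    have := hact t p hp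
    rw [hV t] at this
    exact this
  intro s
  induction s with
  | zero =>
    intro x hx
    have : x = p := by
      have := norm1_eq_zero (z := x - p) (by exact_mod_cast hx)
      funext i; have := congrFun this i; simp at this; omega
    subst this
    simpa using mem_burnSet_self hp
  | succ s ih =>
    intro x hx
    rcases le_or_gt (norm1 (x - p)) (s : ℤ) with h | h
    · exact burnSet_mono (by omega) (ih x h)
    · have heq : norm1 (x - p) = (s : ℤ) + 1 := by push_cast at hx ⊢; omega
      obtain ⟨b, hb1, hb2⟩ := step_closer heq (by positivity)
      have hbB : b ∈ burnSet V v (t + s) := ih b (le_of_eq hb2)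
      have hxV : x ∈ V (t + s + 1) := by
        rw [hV (t + s + 1)]
        intro j
        have h1 : |x j| ≤ |x j - p j| + |p j| := by
          have := abs_sub_abs_le_abs_sub (x j) (p j); omega
        have h2 : |x j - p j| ≤ (s : ℤ) + 1 := by
          rw [norm1_two] at heq
          simp only [Pi.sub_apply] at heq
          have a0 := abs_nonneg (x 0 - p 0); have a1 := abs_nonneg (x 1 - p 1)
          have hj : j = 0 ∨ j = 1 := by omega
          rcases hj with hj | hj <;> rw [hj] <;> omega
        have h3 := ceil_add_le c hc t (s + 1)
        have := hpV j
        push_cast at h3 ⊢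
        ring_nf at h3 ⊢
        omega
      have : x ∈ burnSet V v ((t + s) + 1) :=
        Or.inl (Or.inr ⟨by exact_mod_cast hxV, b, hbB, hb1⟩)
      rw [show t + (s+1) = (t+s)+1 by omega]
      exact this

end Burning

namespace Burning

/-- integer fourth root -/
def K (n : ℕ) : ℕ := Nat.sqrt (Nat.sqrt n)

lemma K_le_iff {k n : ℕ} : k ≤ K n ↔ k^4 ≤ n := by
  rw [K, Nat.le_sqrt, Nat.le_sqrt]
  constructor <;> intro h <;> nlinarith

lemma K_pow_le (n : ℕ) : (K n)^4 ≤ n := K_le_iff.mp le_rfl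

lemma lt_K_pow (n : ℕ) : n < (K n + 1)^4 := by
  by_contra h
  push_neg at h
  have := K_le_iff.mpr h
  omega

lemma K_eq {k m : ℕ} (hm : k^4 + m < (k+1)^4) : K (k^4 + m) = k := by
  have h1 : k ≤ K (k^4 + m) := K_le_iff.mpr (by omega)
  have h2 : ¬ (k+1 ≤ K (k^4+m)) := fun h => by have := K_le_iff.mp h; omega
  omega

lemma K_tendsto : Filter.Tendsto K Filter.atTop Filter.atTop := by
  apply Filter.tendsto_atTop.mpr
  intro b
  apply Filter.eventually_atTop.mpr
  exact ⟨b^4, fun n hn => K_le_iff.mpr hn⟩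

noncomputable def Rr (c : ℝ) (k : ℕ) : ℤ := ⌈c * (k:ℝ)^4⌉
noncomputable def sp (c : ℝ) (k : ℕ) : ℤ := Rr c k / (k : ℤ) + 1
def gpt (s i j : ℤ) : Pt 2 := ![s * i, s * j]

noncomputable def act (c : ℝ) (n : ℕ) : Option (Pt 2) :=
  let k := K n
  let m := n - k^4
  if 2 ≤ k ∧ m < (2*k-1)^2 then
    some (gpt (sp c k) ((m / (2*k-1) : ℕ) - ((k:ℤ) - 1)) ((m % (2*k-1) : ℕ) - ((k:ℤ)-1)))
  else none

section Rsp
variable {c : ℝ} (hc : 1 ≤ c) {k : ℕ} (hk : 2 ≤ k)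

include hc in
lemma Rr_lb : ((k:ℤ))^4 ≤ Rr c k := by
  have h : ((k:ℝ))^4 ≤ c * (k:ℝ)^4 := by nlinarith [pow_nonneg (Nat.cast_nonneg (α := ℝ) k) 4]
  calc ((k:ℤ))^4 = (((k:ℤ)^4 : ℤ) : ℤ) := rfl
    _ ≤ ⌈c * (k:ℝ)^4⌉ := by
        rw [Int.le_ceil_iff]
        push_cast
        nlinarith
  
include hc in
lemma Rr_nonneg : 0 ≤ Rr c k := le_trans (by positivity) (Rr_lb hc)

lemma Rr_ub : Rr c k ≤ ⌈c⌉ * (k:ℤ)^4 := by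
  apply Int.ceil_le.mpr
  push_cast
  have h1 : c ≤ (⌈c⌉ : ℝ) := Int.le_ceil c
  nlinarith [pow_nonneg (Nat.cast_nonneg (α := ℝ) k) 4]

include hc in
lemma sp_pos : 1 ≤ sp c k := by
  have h : 0 ≤ Rr c k / (k:ℤ) := Int.ediv_nonneg (Rr_nonneg hc) (Int.ofNat_nonneg k)
  unfold sp; omega

include hc hk in
lemma mul_sp_ge : Rr c k + 1 ≤ (k:ℤ) * sp c k := by
  have hk' : (0:ℤ) < (k:ℤ) := by exact_mod_cast (by omega : 0 < k)
  have h1 := Int.mul_ediv_add_emod (Rr c k) (k:ℤ)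
  have h2 := Int.emod_lt_of_pos (Rr c k) hk'
  unfold sp
  nlinarith [Int.emod_nonneg (Rr c k) (ne_of_gt hk')]

lemma sp_ub (hk1 : 1 ≤ k) : sp c k ≤ ⌈c⌉ * (k:ℤ)^3 + 1 := by
  have hk' : (0:ℤ) < (k:ℤ) := by exact_mod_cast hk1
  have h1 : Rr c k / (k:ℤ) ≤ (⌈c⌉ * (k:ℤ)^4) / (k:ℤ) := Int.ediv_le_ediv hk' Rr_ub
  have h2 : (⌈c⌉ * (k:ℤ)^4) / (k:ℤ) = ⌈c⌉ * (k:ℤ)^3 := by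
    rw [show ⌈c⌉ * (k:ℤ)^4 = (⌈c⌉ * (k:ℤ)^3) * (k:ℤ) by ring]
    exact Int.mul_ediv_cancel _ (ne_of_gt hk')
  unfold sp; omega

include hc hk in
lemma valid_ub : ((k:ℤ) - 1) * sp c k ≤ Rr c k := by
  have hk' : (0:ℤ) < (k:ℤ) := by exact_mod_cast (by omega : 0 < k)
  have hk2 : (2:ℤ) ≤ (k:ℤ) := by exact_mod_cast hk
  set q := Rr c k / (k:ℤ) with hq
  have h1 := Int.mul_ediv_add_emod (Rr c k) (k:ℤ)
  have h2 := Int.emod_nonneg (Rr c k) (ne_of_gt hk')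
  have h3 : (k:ℤ)^3 ≤ q := by
    rw [hq]
    rw [Int.le_ediv_iff_mul_le hk']
    calc (k:ℤ)^3 * (k:ℤ) = (k:ℤ)^4 := by ring
      _ ≤ Rr c k := Rr_lb hc
  have hkc : (0:ℤ) ≤ (k:ℤ) - 2 := by linarith
  have h4 : (k:ℤ) - 1 ≤ q := by
    nlinarith [mul_nonneg hkc (sq_nonneg (k:ℤ)), mul_nonneg hkc (le_of_lt hk')]
  rw [← hq] at h1
  have h5 : (k:ℤ) * q ≤ Rr c k := by omega
  unfold sp
  rw [← hq]
  nlinarith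

end Rsp
end Burning

namespace Burning
variable {c : ℝ} {V : ℕ → Set (Pt 2)}

lemma act_encode (hc : 1 ≤ c) {k : ℕ} (hk : 2 ≤ k) {i j : ℤ}
    (hi : |i| ≤ (k:ℤ) - 1) (hj : |j| ≤ (k:ℤ) - 1) :
    ∃ t : ℕ, t < k^4 + (2*k-1)^2 ∧ act c t = some (gpt (sp c k) i j) := by
  rw [abs_le] at hi hj
  set u : ℕ := 2*k - 1 with hu
  obtain ⟨w, hw⟩ : ∃ w, u = w + 1 := ⟨u - 1, by omega⟩
  have hkZ : ((k:ℤ)) = (k:ℕ) := rfl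
  set a : ℕ := (i + ((k:ℤ)-1)).toNat with hadef
  set b : ℕ := (j + ((k:ℤ)-1)).toNat with hbdef
  have ha : (a:ℤ) = i + ((k:ℤ)-1) := Int.toNat_of_nonneg (by omega)
  have hb : (b:ℤ) = j + ((k:ℤ)-1) := Int.toNat_of_nonneg (by omega)
  have ha' : a ≤ 2*k-2 := by
    have : (a:ℤ) ≤ 2*(k:ℤ)-2 := by omega
    have hk2 : (2:ℤ) ≤ (k:ℤ) := by exact_mod_cast hk
    omega
  have hb' : b ≤ 2*k-2 := by
    have : (b:ℤ) ≤ 2*(k:ℤ)-2 := by omega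
    have hk2 : (2:ℤ) ≤ (k:ℤ) := by exact_mod_cast hk
    omega
  set m : ℕ := a * u + b with hm
  have hbu : b < u := by omega
  have hau : a ≤ w := by omega
  have hmlt : m < u^2 := by
    calc m = a * u + b := hm
      _ ≤ w * u + w := by
          exact add_le_add (Nat.mul_le_mul_right u hau) (by omega)
      _ < u^2 := by rw [hw]; ring_nf; omega
  have hm4 : k^4 + m < (k+1)^4 := by
    have h1 : u ≤ 2*k := by omega
    have h2 : u^2 ≤ (2*k)^2 := Nat.pow_le_pow_left h1 2
    have h3 : (2*k)^2 ≤ 4*k^3 := by nlinarith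
    have h4 : k^4 + 4*k^3 < (k+1)^4 := by nlinarith
    omega
  refine ⟨k^4 + m, Nat.add_lt_add_left hmlt _, ?_⟩
  have hK : K (k^4 + m) = k := K_eq hm4
  simp only [act, hK, Nat.add_sub_cancel_left]
  rw [if_pos ⟨hk, by rw [← hu]; exact hmlt⟩]
  have hdiv : m / u = a := by
    rw [hm, mul_comm a u, Nat.mul_add_div (by omega), Nat.div_eq_of_lt hbu]
    omega
  have hmod : m % u = b := by
    rw [hm, mul_comm a u, Nat.mul_add_mod, Nat.mod_eq_of_lt hbu]
  rw [← hu, hdiv, hmod]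
  rw [show ((a:ℤ) - ((k:ℤ)-1)) = i by omega, show ((b:ℤ) - ((k:ℤ)-1)) = j by omega]

lemma act_isActivator (hc : 1 ≤ c) (hV : ∀ n : ℕ, V n = sqGrid ⌈c * n⌉) :
    IsActivator V (act c) := by
  intro n x hx
  simp only [act] at hx
  split_ifs at hx with hcond
  · obtain ⟨hk, hmlt⟩ := hcond
    set k := K n with hkdef
    set u : ℕ := 2*k-1 with hu
    set m : ℕ := n - k^4 with hmdef
    have hu0 : 0 < u := by omega
    have hdivlt : m / u < u := (Nat.div_lt_iff_lt_mul hu0).mpr (by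
      calc m < u^2 := hmlt
        _ = u * u := sq u)
    have hmodlt : m % u < u := Nat.mod_lt _ hu0
    have hki : ((2*k-1 : ℕ):ℤ) = 2*(k:ℤ)-1 := by
      have : (2:ℕ) ≤ 2*k := by omega
      push_cast [hu]
      omega
    set i : ℤ := ((m / u : ℕ):ℤ) - ((k:ℤ)-1) with hidef
    set j : ℤ := ((m % u : ℕ):ℤ) - ((k:ℤ)-1) with hjdef
    have hiabs : |i| ≤ (k:ℤ)-1 := by
      rw [abs_le, hidef]
      have h1 : (0:ℤ) ≤ ((m/u : ℕ):ℤ) := Int.ofNat_nonneg _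
      have h2 : ((m/u : ℕ):ℤ) ≤ 2*(k:ℤ)-2 := by
        have : ((m/u : ℕ):ℤ) < ((u:ℕ):ℤ) := by exact_mod_cast hdivlt
        omega
      constructor <;> omega
    have hjabs : |j| ≤ (k:ℤ)-1 := by
      rw [abs_le, hjdef]
      have h1 : (0:ℤ) ≤ ((m%u : ℕ):ℤ) := Int.ofNat_nonneg _
      have h2 : ((m%u : ℕ):ℤ) ≤ 2*(k:ℤ)-2 := by
        have : ((m%u : ℕ):ℤ) < ((u:ℕ):ℤ) := by exact_mod_cast hmodlt
        omega
      constructor <;> omega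
    have hxval : x = gpt (sp c k) i j := by
      injection hx with hx'
      rw [← hx']
    have hsp : 0 ≤ sp c k := le_trans one_pos.le (sp_pos hc)
    have hbound : ∀ z : ℤ, |z| ≤ (k:ℤ)-1 → |sp c k * z| ≤ Rr c k := by
      intro z hz
      rw [abs_mul, abs_of_nonneg hsp]
      calc sp c k * |z| ≤ sp c k * ((k:ℤ)-1) := by
            exact mul_le_mul_of_nonneg_left hz hsp
        _ = ((k:ℤ)-1) * sp c k := by ring
        _ ≤ Rr c k := valid_ub hc hk
    have hRn : Rr c k ≤ ⌈c * n⌉ := by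
      have hn4 : k^4 ≤ n := K_pow_le n
      have : ((k:ℝ))^4 = ((k^4 : ℕ) : ℝ) := by push_cast; ring
      rw [Rr, this]
      exact ceil_mono' c hc hn4
    rw [hV n]
    intro t
    have ht : t = 0 ∨ t = 1 := by omega
    rcases ht with ht | ht <;> rw [hxval, ht]
    · simp only [gpt, Matrix.cons_val_zero]
      exact le_trans (hbound i hiabs) hRn
    · simp only [gpt, Matrix.cons_val_one, Matrix.head_cons]
      exact le_trans (hbound j hjabs) hRn

lemma cover (hc : 1 ≤ c) (hV : ∀ n : ℕ, V n = sqGrid ⌈c * n⌉) {k n : ℕ} (hk : 2 ≤ k)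
    (hn : k^4 + (2*k-1)^2 + 2*(sp c k).toNat ≤ n) :
    sqGrid (((k:ℤ)-2) * sp c k) ⊆ burnSet V (act c) n := by
  intro x hx
  set s : ℤ := sp c k with hsdef
  have hs : 1 ≤ s := sp_pos hc
  have hs0 : (0:ℤ) < s := by omega
  set i : ℤ := x 0 / s with hidef
  set j : ℤ := x 1 / s with hjdef
  have key : ∀ z : ℤ, |z| ≤ ((k:ℤ)-2) * s → |z / s| ≤ (k:ℤ)-2 ∧
      (0 ≤ z - s * (z / s) ∧ z - s * (z / s) ≤ s - 1) := by
    intro z hz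
    rw [abs_le] at hz
    have h1 : z / s ≤ (k:ℤ)-2 := by
      have := Int.ediv_le_ediv hs0 hz.2
      rwa [Int.mul_ediv_cancel _ (ne_of_gt hs0)] at this
    have h2 : -((k:ℤ)-2) ≤ z / s := by
      have := Int.ediv_le_ediv hs0 hz.1
      rwa [show -(((k:ℤ)-2)*s) = (-((k:ℤ)-2))*s by ring,
        Int.mul_ediv_cancel _ (ne_of_gt hs0)] at this
    have h3 := Int.mul_ediv_add_emod z s
    have h4 := Int.emod_nonneg z (ne_of_gt hs0)
    have h5 := Int.emod_lt_of_pos z hs0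
    exact ⟨abs_le.mpr ⟨by omega, h1⟩, by omega, by omega⟩
  have hx0 := key (x 0) (hx 0)
  have hx1 := key (x 1) (hx 1)
  have hk1 : ((k:ℤ)-2) ≤ (k:ℤ)-1 := by omega
  obtain ⟨t, htlt, hact⟩ := act_encode (c := c) hc hk
    (le_trans hx0.1 hk1) (le_trans hx1.1 hk1)
  have htn : t ≤ n := by omega
  have hnorm : norm1 (x - gpt s i j) ≤ ((n - t : ℕ) : ℤ) := by
    rw [norm1_two]
    simp only [Pi.sub_apply, gpt, Matrix.cons_val_zero, Matrix.cons_val_one, Matrix.head_cons]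
    rw [abs_of_nonneg hx0.2.1, abs_of_nonneg hx1.2.1]
    have hsnat : ((sp c k).toNat : ℤ) = s := Int.toNat_of_nonneg (by omega)
    have hcast : ((n - t : ℕ) : ℤ) = (n:ℤ) - (t:ℤ) := by
      push_cast [Nat.cast_sub htn]; ring
    have hterm : (t:ℤ) + 2 * s ≤ (n:ℤ) := by
      have : ((k^4 + (2*k-1)^2 + 2*(sp c k).toNat : ℕ) : ℤ) ≤ ((n:ℕ):ℤ) := by
        exact_mod_cast hn
      push_cast at this
      have htlt' : (t:ℤ) < ((k^4 + (2*k-1)^2 : ℕ):ℤ) := by exact_mod_cast htlt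
      push_cast at htlt'
      omega
    omega
  have := fire_spread hc hV (act_isActivator hc hV) hact (n - t) x hnorm
  rwa [show t + (n - t) = n by omega] at this

end Burning

namespace Burning
variable {c : ℝ} {V : ℕ → Set (Pt 2)}

lemma V_mono (hc : 1 ≤ c) (hV : ∀ n : ℕ, V n = sqGrid ⌈c * n⌉) :
    ∀ m n : ℕ, m ≤ n → V m ⊆ V n := by
  intro m n h
  rw [hV m, hV n]
  exact sqGrid_mono (ceil_mono' c hc h)

lemma V_ncard_pos (hc : 1 ≤ c) (hV : ∀ n : ℕ, V n = sqGrid ⌈c * n⌉) (n : ℕ) :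
    (0:ℝ) < ((V n).ncard : ℝ) := by
  rw [hV n, sqGrid_ncard _ (ceil_nonneg' c hc n)]
  have h := ceil_nonneg' c hc n
  have : (0:ℝ) < ((2*⌈c*n⌉+1 : ℤ):ℝ) := by exact_mod_cast (by omega : (0:ℤ) < 2*⌈c*n⌉+1)
  positivity

lemma density_le_one (hc : 1 ≤ c) (hV : ∀ n : ℕ, V n = sqGrid ⌈c * n⌉) (n : ℕ) :
    densitySeq V (act c) n ≤ 1 := by
  have hfin : (V n).Finite := by rw [hV n]; exact sqGrid_finite _
  have hsub := burnSet_subset_V (act_isActivator hc hV) (V_mono hc hV) n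
  have hcard : ((burnSet V (act c) n).ncard : ℝ) ≤ ((V n).ncard : ℝ) := by
    exact_mod_cast Set.ncard_le_ncard hsub hfin
  rw [densitySeq, div_le_one (V_ncard_pos hc hV n)]
  exact hcard

lemma density_lb (hc : 1 ≤ c) (hV : ∀ n : ℕ, V n = sqGrid ⌈c * n⌉) {k n : ℕ} (hk : 2 ≤ k)
    (hn : k^4 + (2*k-1)^2 + 2*(sp c k).toNat ≤ n) :
    (((2*((((k:ℤ))-2) * sp c k)+1 : ℤ):ℝ))^2 / (((2*⌈c*(n:ℕ)⌉+1 : ℤ):ℝ))^2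
      ≤ densitySeq V (act c) n := by
  have hfin : (V n).Finite := by rw [hV n]; exact sqGrid_finite _
  have hsub := cover hc hV hk hn
  have hsp := sp_pos (k := k) hc
  have hr : (0:ℤ) ≤ ((k:ℤ)-2) * sp c k := by
    have : (2:ℤ) ≤ (k:ℤ) := by exact_mod_cast hk
    nlinarith
  have hcard : ((sqGrid ((((k:ℤ))-2) * sp c k)).ncard : ℝ)
      ≤ ((burnSet V (act c) n).ncard : ℝ) := by
    exact_mod_cast Set.ncard_le_ncard hsub (hfin.subset
      (burnSet_subset_V (act_isActivator hc hV) (V_mono hc hV) n))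
  rw [densitySeq, ← sqGrid_ncard _ hr]
  have hVn : ((V n).ncard : ℝ) = (((2*⌈c*(n:ℕ)⌉+1 : ℤ):ℝ))^2 := by
    rw [hV n, sqGrid_ncard _ (ceil_nonneg' c hc n)]
  rw [← hVn]
  rw [div_le_div_iff_of_pos_right (V_ncard_pos hc hV n)]
  exact hcard

end Burning

namespace Burning
variable {c : ℝ} {V : ℕ → Set (Pt 2)}

section Final
variable (c)

/-- the coarse integer ceiling of `c` -/
noncomputable def ga : ℕ := ⌈c⌉.toNat
/-- offset -/
noncomputable def Cc : ℕ := ga c + 2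
/-- the real lower-bound function, as a function of `1/k` -/
noncomputable def Ff (u : ℝ) : ℝ :=
  ((2*c - 4*(ga c : ℝ)*u - u^4) / (2*c*(1+((Cc c : ℝ)+1)*u)^4 + 3*u^4))^2
/-- the lower-bound sequence -/
noncomputable def Gg (k : ℕ) : ℝ :=
  ((2*c*(k:ℝ)^4 - 4*(ga c : ℝ)*(k:ℝ)^3 - 1) / (2*c*((k:ℝ)+((Cc c : ℝ)+1))^4 + 3))^2

end Final

lemma ceil_pos_of_one_le (hc : 1 ≤ c) : (1:ℤ) ≤ ⌈c⌉ := by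
  calc (1:ℤ) = ⌈(1:ℝ)⌉ := by simp
    _ ≤ ⌈c⌉ := Int.ceil_le_ceil hc

lemma ga_cast (hc : 1 ≤ c) : ((ga c : ℕ) : ℤ) = ⌈c⌉ := by
  rw [ga]
  exact Int.toNat_of_nonneg (le_trans (by norm_num) (ceil_pos_of_one_le hc))

lemma ga_pos (hc : 1 ≤ c) : 1 ≤ ga c := by
  have h := ga_cast (c := c) hc
  have := ceil_pos_of_one_le hc
  omega

lemma c_le_ga (hc : 1 ≤ c) : c ≤ (ga c : ℝ) := by
  have h := ga_cast (c := c) hc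
  have h2 : c ≤ ((⌈c⌉ : ℤ) : ℝ) := Int.le_ceil c
  rw [show ((ga c : ℕ):ℝ) = (((ga c : ℕ) : ℤ) : ℝ) by push_cast; ring, h]
  exact h2

lemma Gg_eq_Ff (hc : 1 ≤ c) {k : ℕ} (hk : 1 ≤ k) : Gg c k = Ff c ((k:ℝ)⁻¹) := by
  have hx : (0:ℝ) < (k:ℝ) := by exact_mod_cast hk
  have hc0 : (0:ℝ) < c := by linarith
  rw [Gg, Ff]
  congr 1
  rw [div_eq_div_iff (by positivity) (by positivity)]
  field_simp

lemma Ff_cont (hc : 1 ≤ c) : ContinuousAt (Ff c) 0 := by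
  have hc0 : (0:ℝ) < c := by linarith
  apply ContinuousAt.pow
  apply ContinuousAt.div
  · fun_prop
  · fun_prop
  · norm_num
    linarith

lemma Ff_zero (hc : 1 ≤ c) : Ff c 0 = 1 := by
  have hc0 : (0:ℝ) < c := by linarith
  rw [Ff]
  norm_num
  rw [div_self (by linarith)]
  norm_num
  exact hc0.ne'

lemma Gg_tendsto (hc : 1 ≤ c) : Filter.Tendsto (Gg c) Filter.atTop (nhds 1) := by
  have h1 : Filter.Tendsto (fun k : ℕ => ((k:ℝ))⁻¹) Filter.atTop (nhds 0) :=
    tendsto_inv_atTop_zero.comp tendsto_natCast_atTop_atTop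
  have h2 : Filter.Tendsto (fun k : ℕ => Ff c ((k:ℝ)⁻¹)) Filter.atTop (nhds 1) := by
    have := (Ff_cont hc).tendsto.comp h1
    rwa [Ff_zero hc] at this
  apply h2.congr'
  filter_upwards [Filter.eventually_atTop.mpr ⟨1, fun k hk => hk⟩] with k hk
  exact (Gg_eq_Ff hc hk).symm

lemma Kn_sub_tendsto (C : ℕ) :
    Filter.Tendsto (fun n : ℕ => K n - C) Filter.atTop Filter.atTop := by
  apply Filter.tendsto_atTop.mpr
  intro b
  apply Filter.eventually_atTop.mpr
  refine ⟨(b+C)^4, fun n hn => ?_⟩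
  have : b + C ≤ K n := K_le_iff.mpr hn
  omega

lemma key_lb (hc : 1 ≤ c) (hV : ∀ n : ℕ, V n = sqGrid ⌈c * n⌉) {n : ℕ}
    (hKn : Cc c + (2*(ga c)+2) ≤ K n) :
    Gg c (K n - Cc c) ≤ densitySeq V (act c) n := by
  set γ' : ℕ := ga c with hγ'
  set C : ℕ := Cc c with hC
  set k : ℕ := K n - C with hkdef
  have hγ1 : 1 ≤ γ' := ga_pos hc
  have hKeq : K n = k + C := by omega
  have hk0 : 2*γ' + 2 ≤ k := by omega
  have hk2 : 2 ≤ k := by omega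
  have hkR : (2:ℝ)*(γ':ℝ) + 2 ≤ (k:ℝ) := by exact_mod_cast hk0
  have hγcast : ((γ':ℕ):ℤ) = ⌈c⌉ := ga_cast hc
  -- step 1 : the coverage hypothesis
  have hspub : (sp c k).toNat ≤ γ' * k^3 + 1 := by
    have h1 : sp c k ≤ ⌈c⌉ * (k:ℤ)^3 + 1 := sp_ub (by omega)
    have h2 : (⌈c⌉ * (k:ℤ)^3 + 1) = ((γ' * k^3 + 1 : ℕ) : ℤ) := by
      push_cast [← hγcast]; ring
    rw [h2] at h1
    exact Int.toNat_le.mpr h1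
  have hn : k^4 + (2*k-1)^2 + 2*(sp c k).toNat ≤ n := by
    have hK4 : (k + C)^4 ≤ n := by rw [← hKeq]; exact K_pow_le n
    have h1 : (2*k-1)^2 ≤ 4*k^2 := by
      calc (2*k-1)^2 ≤ (2*k)^2 := Nat.pow_le_pow_left (by omega) 2
        _ = 4*k^2 := by ring
    have h2 : k^4 + 4*k^2 + 2*(γ'*k^3+1) ≤ (k + C)^4 := by
      have hCval : C = γ' + 2 := by rw [hC, Cc, ← hγ']
      rw [hCval]
      have hexp : (k + (γ'+2))^4 = k^4 + 4*k^3*γ' + 8*k^3 + 6*k^2*(γ'+2)^2 + 4*k*(γ'+2)^3 + (γ'+2)^4 := by ring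
      rw [hexp]
      have e1 : k^2 ≤ k^3 := Nat.pow_le_pow_right (by omega) (by omega)
      have e2 : 1 ≤ k^2 := Nat.one_le_pow _ _ (by omega)
      nlinarith [e1, e2, Nat.zero_le (6*k^2*(γ'+2)^2), Nat.zero_le (4*k*(γ'+2)^3),
        Nat.zero_le ((γ'+2)^4), Nat.zero_le (k^3*γ')]
    omega
  -- step 2 : numerator bound
  have hsp1 : 1 ≤ sp c k := sp_pos hc
  have hnum : (0:ℝ) ≤ 2*c*(k:ℝ)^4 - 4*(γ':ℝ)*(k:ℝ)^3 - 1 := by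
    have hkpos : (0:ℝ) < (k:ℝ) := by
      have : (0:ℕ) < k := by omega
      exact_mod_cast this
    have hk3 : (0:ℝ) < (k:ℝ)^3 := by positivity
    have p1 : (2*(γ':ℝ)+2) * (k:ℝ)^3 ≤ (k:ℝ) * (k:ℝ)^3 :=
      mul_le_mul_of_nonneg_right hkR (le_of_lt hk3)
    have p3 : (k:ℝ)^4 ≤ c*(k:ℝ)^4 := by nlinarith [pow_pos hkpos 4]
    have hk31 : (1:ℝ) ≤ (k:ℝ)^3 := one_le_pow₀ (by exact_mod_cast (by omega : 1 ≤ k))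
    nlinarith [p1, p3, hk31]
  have hnumA : 2*c*(k:ℝ)^4 - 4*(γ':ℝ)*(k:ℝ)^3 - 1
      ≤ (((2*((((k:ℤ))-2) * sp c k)+1 : ℤ):ℝ)) := by
    have h1 : Rr c k + 1 ≤ (k:ℤ) * sp c k := mul_sp_ge hc hk2
    have h2 : sp c k ≤ ⌈c⌉ * (k:ℤ)^3 + 1 := sp_ub (by omega)
    have h3 : 2*Rr c k - 4*⌈c⌉*(k:ℤ)^3 - 1 ≤ 2*((((k:ℤ))-2) * sp c k)+1 := by nlinarith
    have h4 : c*(k:ℝ)^4 ≤ ((Rr c k : ℤ):ℝ) := by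
      rw [Rr]
      exact Int.le_ceil _
    have h5 : (((2*Rr c k - 4*⌈c⌉*(k:ℤ)^3 - 1 : ℤ)):ℝ) ≤ (((2*((((k:ℤ))-2) * sp c k)+1 : ℤ):ℝ)) := by
      exact_mod_cast h3
    have h6 : ((⌈c⌉:ℤ):ℝ) = (γ':ℝ) := by rw [← hγcast]; push_cast; ring
    push_cast at h5
    push_cast
    rw [h6] at h5
    nlinarith [h4]
  -- step 3 : denominator bound
  have hden1 : (0:ℝ) < (((2*⌈c*(n:ℕ)⌉+1 : ℤ):ℝ)) := by
    have := ceil_nonneg' c hc n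
    exact_mod_cast (by omega : (0:ℤ) < 2*⌈c*(n:ℕ)⌉+1)
  have hdenA : (((2*⌈c*(n:ℕ)⌉+1 : ℤ):ℝ)) ≤ 2*c*((k:ℝ)+((C:ℝ)+1))^4 + 3 := by
    have h1 : ((⌈c*(n:ℕ)⌉ : ℤ):ℝ) < c*(n:ℕ) + 1 := Int.ceil_lt_add_one _
    have h2 : (n:ℝ) < ((k:ℝ)+((C:ℝ)+1))^4 := by
      have := lt_K_pow n
      rw [hKeq] at this
      have h3 : (n:ℝ) < (((k + C + 1)^4 : ℕ) : ℝ) := by exact_mod_cast this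
      calc (n:ℝ) < (((k + C + 1)^4 : ℕ) : ℝ) := h3
        _ = ((k:ℝ)+((C:ℝ)+1))^4 := by push_cast; ring
    have hc0 : (0:ℝ) < c := by linarith
    have h4 : c*(n:ℝ) ≤ c*((k:ℝ)+((C:ℝ)+1))^4 := mul_le_mul_of_nonneg_left h2.le hc0.le
    push_cast
    linarith [h1, h4]
  -- combine
  have hstep := density_lb hc hV hk2 hn
  refine le_trans ?_ hstep
  rw [Gg]
  have hfr : (0:ℝ) ≤ (2*c*(k:ℝ)^4 - 4*(γ':ℝ)*(k:ℝ)^3 - 1) / (2*c*((k:ℝ)+((C:ℝ)+1))^4 + 3) := by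
    apply div_nonneg hnum
    have hc0 : (0:ℝ) < c := by linarith
    positivity
  have harg : (2*c*(k:ℝ)^4 - 4*(γ':ℝ)*(k:ℝ)^3 - 1) / (2*c*((k:ℝ)+((C:ℝ)+1))^4 + 3)
      ≤ (((2*((((k:ℤ))-2) * sp c k)+1 : ℤ):ℝ)) / (((2*⌈c*(n:ℕ)⌉+1 : ℤ):ℝ)) := by
    apply div_le_div₀ _ hnumA hden1 hdenA
    exact le_trans hnum hnumA
  calc ((2*c*(k:ℝ)^4 - 4*(γ':ℝ)*(k:ℝ)^3 - 1) / (2*c*((k:ℝ)+((C:ℝ)+1))^4 + 3))^2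
      ≤ ((((2*((((k:ℤ))-2) * sp c k)+1 : ℤ):ℝ)) / (((2*⌈c*(n:ℕ)⌉+1 : ℤ):ℝ)))^2 :=
        pow_le_pow_left₀ hfr harg 2
    _ = (((2*((((k:ℤ))-2) * sp c k)+1 : ℤ):ℝ))^2 / (((2*⌈c*(n:ℕ)⌉+1 : ℤ):ℝ))^2 := by
        rw [div_pow]

end Burning



open Burning in
/-- for `c ≥ 1` and grids `S_n = [-⌈cn⌉, ⌈cn⌉]²`, there is an
activator sequence whose burning density exists and equals `1`. -/
theorem stmt2 (c : ℝ) (hc : 1 ≤ c)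
    (V : ℕ → Set (Pt 2)) (hV : ∀ n : ℕ, V n = sqGrid ⌈c * n⌉) :
    ∃ v : ℕ → Option (Pt 2),
      IsActivator V v ∧
      Filter.Tendsto (densitySeq V v) Filter.atTop (nhds 1) := by
  refine ⟨act c, act_isActivator hc hV, ?_⟩
  apply tendsto_of_tendsto_of_tendsto_of_le_of_le'
    (g := fun n => Gg c (K n - Cc c)) (h := fun _ => (1:ℝ))
  · exact (Gg_tendsto hc).comp (Kn_sub_tendsto (Cc c))
  · exact tendsto_const_nhds
  · have hev : ∀ᶠ n in Filter.atTop, Cc c + (2*(ga c)+2) ≤ K n :=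
      Filter.eventually_atTop.mpr ⟨(Cc c + (2*(ga c)+2))^4, fun n hn => K_le_iff.mpr hn⟩
    filter_upwards [hev] with n hn
    exact key_lb hc hV hn
  · exact Filter.Eventually.of_forall (density_le_one hc hV)
end

section
/- For every n ≥ 0, let Q_n be the grid graph on vertex set [0, n]² ⊆ ℤ², and let k be a positive integer. Let v = (v_n)_{n≥0} be an activator sequence such that there are never more than k consecutive indices n with v_n = •, and such that whenever v_n ≠ •, v_n = (n, n). Then the burning density δ(Q, v) exists and equals 1. -/
open Filter Topology

namespace Burning

lemma pt2_eta (x : Pt 2) : ![x 0, x 1] = x := by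
  funext i; fin_cases i <;> rfl

lemma dist1_pair (p q r s : ℤ) : dist1 ![p, q] ![r, s] = |p - r| + |q - s| := by
  simp [dist1, Fin.sum_univ_two]

lemma mem_quadGrid (p q a : ℤ) :
    ![p, q] ∈ quadGrid a ↔ (0 ≤ p ∧ p ≤ a) ∧ (0 ≤ q ∧ q ≤ a) := by
  constructor
  · intro h; exact ⟨h 0, h 1⟩
  · rintro ⟨h0, h1⟩ i; fin_cases i <;> simpa

lemma quadGrid_mono {a b : ℤ} (h : a ≤ b) : quadGrid a ⊆ quadGrid b := by
  intro x hx i; exact ⟨(hx i).1, (hx i).2.trans h⟩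

lemma quadGrid_eq_finset (a : ℤ) :
    quadGrid a = ↑(Fintype.piFinset fun _ : Fin 2 => Finset.Icc (0:ℤ) a) := by
  ext x
  rw [Finset.mem_coe, Fintype.mem_piFinset]
  simp [quadGrid, Finset.mem_Icc]

lemma quadGrid_finite (a : ℤ) : (quadGrid a).Finite := by
  rw [quadGrid_eq_finset]; exact (Fintype.piFinset _).finite_toSet

lemma quadGrid_ncard (a : ℤ) : (quadGrid a).ncard = ((a + 1).toNat) ^ 2 := by
  rw [quadGrid_eq_finset, Set.ncard_coe_finset, Fintype.card_piFinset]
  simp [Int.card_Icc, sq]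

lemma burnSet_mono_s6 (V : ℕ → Set (Pt 2)) (v : ℕ → Option (Pt 2)) (n : ℕ) :
    burnSet V v n ⊆ burnSet V v (n + 1) := by
  intro x hx
  exact Or.inl (Or.inl hx)

lemma burnSet_step (V : ℕ → Set (Pt 2)) (v : ℕ → Option (Pt 2)) {n : ℕ}
    {y x : Pt 2} (hy : y ∈ burnSet V v n) (hx : x ∈ V (n + 1)) (hd : dist1 x y = 1) :
    x ∈ burnSet V v (n + 1) :=
  Or.inl (Or.inr ⟨hx, y, hy, hd⟩)

lemma burn_subset (V : ℕ → Set (Pt 2)) (hV : ∀ n : ℕ, V n = quadGrid n)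
    (v : ℕ → Option (Pt 2))
    (hcorner : ∀ n : ℕ, ∀ x, v n = some x → x = ![(n : ℤ), (n : ℤ)]) :
    ∀ n, burnSet V v n ⊆ quadGrid n := by
  intro n
  induction n with
  | zero =>
    intro x hx
    cases h : v 0 with
    | none => rw [burnSet, h] at hx; simp at hx
    | some c =>
      rw [burnSet, h] at hx
      simp only [Option.elim, Set.mem_singleton_iff] at hx
      subst hx
      rw [hcorner 0 _ h]
      rw [mem_quadGrid]; norm_num
  | succ n ih =>
    intro x hx
    rcases hx with (hx | hx) | hx
    · exact quadGrid_mono (by exact_mod_cast Nat.le_succ n) (ih hx)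
    · rw [hV] at hx; exact hx.1
    · cases h : v (n + 1) with
      | none => rw [h] at hx; simp at hx
      | some c =>
        rw [h] at hx
        simp only [Option.elim, Set.mem_singleton_iff] at hx
        subst hx
        rw [hcorner (n+1) _ h]
        rw [mem_quadGrid]; push_cast; constructor <;> constructor <;> omega

lemma corner_burns (V : ℕ → Set (Pt 2)) (v : ℕ → Option (Pt 2)) {m : ℕ} {c : Pt 2}
    (hm : v m = some c) : c ∈ burnSet V v m := by
  cases m with
  | zero => rw [burnSet, hm]; exact rfl
  | succ j => exact Or.inr (by rw [hm]; exact rfl)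

lemma burn_spread (V : ℕ → Set (Pt 2)) (hV : ∀ n : ℕ, V n = quadGrid n)
    (v : ℕ → Option (Pt 2)) {m : ℕ} {c : Pt 2}
    (hm : v m = some c) (hc : c = ![(m : ℤ), (m : ℤ)]) :
    ∀ n, m ≤ n → ∀ x : Pt 2, x ∈ quadGrid n → dist1 x c ≤ (n : ℤ) - m →
      x ∈ burnSet V v n := by
  intro n hn
  induction n, hn using Nat.le_induction with
  | base =>
    intro x hx hd
    have hx' := hx
    rw [← pt2_eta x] at hd ⊢
    rw [hc, dist1_pair] at hd
    have h0 := abs_nonneg (x 0 - (m:ℤ))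
    have h1 := abs_nonneg (x 1 - (m:ℤ))
    have e0 : x 0 = (m:ℤ) := by
      have := abs_cases (x 0 - (m:ℤ)); have := abs_cases (x 1 - (m:ℤ)); omega
    have e1 : x 1 = (m:ℤ) := by
      have := abs_cases (x 0 - (m:ℤ)); have := abs_cases (x 1 - (m:ℤ)); omega
    rw [e0, e1, ← hc]
    exact corner_burns V v hm
  | succ n hn ih =>
    intro x hx hd
    rw [← pt2_eta x] at hx hd ⊢
    set a := x 0 with ha
    set b := x 1 with hb
    rw [mem_quadGrid] at hx
    rw [hc, dist1_pair] at hd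
    obtain ⟨⟨ha0, ha1⟩, hb0, hb1⟩ := hx
    rcases abs_cases (a - (m:ℤ)) with ⟨e0, f0⟩ | ⟨e0, f0⟩ <;>
      rcases abs_cases (b - (m:ℤ)) with ⟨e1, f1⟩ | ⟨e1, f1⟩
    all_goals {
      rw [e0, e1] at hd
      by_cases hcase : a ≤ (n:ℤ) ∧ b ≤ (n:ℤ) ∧ |a - (m:ℤ)| + |b - (m:ℤ)| ≤ (n:ℤ) - m
      · refine burnSet_mono_s6 V v n ?_
        refine ih ![a, b] ?_ ?_
        · rw [mem_quadGrid]; exact ⟨⟨ha0, hcase.1⟩, hb0, hcase.2.1⟩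
        · rw [hc, dist1_pair]; exact hcase.2.2
      · -- move one coordinate towards m
        rw [e0, e1] at hcase
        by_cases hma : a = (m:ℤ)
        · -- move b
          have hbm : b ≠ (m:ℤ) := by omega
          set b' : ℤ := if (m:ℤ) < b then b - 1 else b + 1 with hb'
          refine burnSet_step V v (y := ![a, b']) ?_ ?_ ?_
          · refine ih ![a, b'] ?_ ?_
            · rw [mem_quadGrid]
              refine ⟨⟨ha0, ?_⟩, ?_, ?_⟩ <;> split_ifs at hb' <;> omega
            · rw [hc, dist1_pair]
              rcases abs_cases (a - (m:ℤ)) with ⟨g0, _⟩ | ⟨g0, _⟩ <;>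
                rcases abs_cases (b' - (m:ℤ)) with ⟨g1, _⟩ | ⟨g1, _⟩ <;>
                  rw [g0, g1] <;> split_ifs at hb' <;> omega
          · rw [hV, mem_quadGrid]
            refine ⟨⟨ha0, ?_⟩, hb0, ?_⟩ <;> push_cast <;> omega
          · rw [dist1_pair]
            rcases abs_cases (a - a) with ⟨g0, _⟩ | ⟨g0, _⟩ <;>
              rcases abs_cases (b - b') with ⟨g1, _⟩ | ⟨g1, _⟩ <;>
                rw [g0, g1] <;> split_ifs at hb' <;> omega
        · -- move a
          set a' : ℤ := if (m:ℤ) < a then a - 1 else a + 1 with ha'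
          refine burnSet_step V v (y := ![a', b]) ?_ ?_ ?_
          · refine ih ![a', b] ?_ ?_
            · rw [mem_quadGrid]
              refine ⟨⟨?_, ?_⟩, hb0, ?_⟩ <;> split_ifs at ha' <;> omega
            · rw [hc, dist1_pair]
              rcases abs_cases (a' - (m:ℤ)) with ⟨g0, _⟩ | ⟨g0, _⟩ <;>
                rcases abs_cases (b - (m:ℤ)) with ⟨g1, _⟩ | ⟨g1, _⟩ <;>
                  rw [g0, g1] <;> split_ifs at ha' <;> omega
          · rw [hV, mem_quadGrid]
            refine ⟨⟨ha0, ?_⟩, hb0, ?_⟩ <;> push_cast <;> omega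
          · rw [dist1_pair]
            rcases abs_cases (a - a') with ⟨g0, _⟩ | ⟨g0, _⟩ <;>
              rcases abs_cases (b - b) with ⟨g1, _⟩ | ⟨g1, _⟩ <;>
                rw [g0, g1] <;> split_ifs at ha' <;> omega
    }

end Burning

open Burning in
/-- in the quadrant grids `Q_n = [0, n]²`, if `v` never has more than
`k` consecutive `•`'s and every activated vertex at time `n` is `(n, n)`, then the
burning density is `1`. -/
theorem stmt6 (k : ℕ) (hk : 0 < k)
    (V : ℕ → Set (Pt 2)) (hV : ∀ n : ℕ, V n = quadGrid n)
    (v : ℕ → Option (Pt 2))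
    (hgap : ∀ n : ℕ, ∃ m, n ≤ m ∧ m ≤ n + k ∧ v m ≠ none)
    (hcorner : ∀ n : ℕ, ∀ x, v n = some x → x = ![(n : ℤ), (n : ℤ)]) :
    Filter.Tendsto (densitySeq V v) Filter.atTop (nhds 1) := by
  have hsub := burn_subset V hV v hcorner
  have hcover : ∀ n : ℕ, 3 * k ≤ n → quadGrid ((n:ℤ) - k) ⊆ burnSet V v n := by
    intro n hn x hx
    obtain ⟨ha0, ha1⟩ := hx 0
    obtain ⟨hb0, hb1⟩ := hx 1
    obtain ⟨m, hm1, hm2, hm3⟩ := hgap (x 0 + x 1 - n).toNat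
    obtain ⟨c, hc⟩ := Option.ne_none_iff_exists'.mp hm3
    have hcc := hcorner m c hc
    have hmn : m ≤ n := by omega
    refine burn_spread V hV v hc hcc n hmn x ?_ ?_
    · intro i; exact ⟨(hx i).1, (hx i).2.trans (by omega)⟩
    · rw [← pt2_eta x, hcc, dist1_pair]
      rcases abs_cases (x 0 - (m:ℤ)) with ⟨g0, _⟩ | ⟨g0, _⟩ <;>
        rcases abs_cases (x 1 - (m:ℤ)) with ⟨g1, _⟩ | ⟨g1, _⟩ <;> rw [g0, g1] <;> omega
  have hupper : ∀ n : ℕ, densitySeq V v n ≤ 1 := by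
    intro n
    unfold densitySeq
    rw [hV]
    have h1 : (burnSet V v n).ncard ≤ (quadGrid (n:ℤ)).ncard :=
      Set.ncard_le_ncard (hsub n) (quadGrid_finite _)
    apply div_le_one_of_le₀
    · exact_mod_cast h1
    · positivity
  have hlow : ∀ n : ℕ, 3 * k ≤ n →
      (((n:ℝ) + 1 - k) / ((n:ℝ) + 1)) ^ 2 ≤ densitySeq V v n := by
    intro n hn
    unfold densitySeq
    rw [hV, quadGrid_ncard]
    have hc1 : ((n:ℤ) + 1).toNat = n + 1 := by omega
    rw [hc1]
    have h2 : (quadGrid ((n:ℤ) - k)).ncard ≤ (burnSet V v n).ncard :=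
      Set.ncard_le_ncard (hcover n hn)
        ((quadGrid_finite (n:ℤ)).subset (hsub n))
    rw [quadGrid_ncard] at h2
    have hc2 : ((n:ℤ) - k + 1).toNat = n + 1 - k := by omega
    rw [hc2] at h2
    have hA : (n:ℝ) + 1 - k = ((n + 1 - k : ℕ) : ℝ) := by
      have : k ≤ n + 1 := by omega
      push_cast [this]; ring
    rw [hA, div_pow]
    rw [div_le_div_iff₀ (by positivity) (by positivity)]
    have h2' : (((n + 1 - k : ℕ) : ℝ)) ^ 2 ≤ ((burnSet V v n).ncard : ℝ) := by
      calc (((n + 1 - k : ℕ) : ℝ)) ^ 2 = (((n + 1 - k) ^ 2 : ℕ) : ℝ) := by push_cast; ring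
        _ ≤ _ := by exact_mod_cast h2
    have hpos : (0:ℝ) ≤ ((n:ℝ) + 1) ^ 2 := by positivity
    calc ((n + 1 - k : ℕ) : ℝ) ^ 2 * ((n + 1 : ℕ) ^ 2 : ℕ) ≤
        ((burnSet V v n).ncard : ℝ) * ((n + 1 : ℕ) ^ 2 : ℕ) := by
          apply mul_le_mul_of_nonneg_right h2' (by positivity)
      _ = ((burnSet V v n).ncard : ℝ) * ((n:ℝ) + 1) ^ 2 := by push_cast; ring
  have hlim : Tendsto (fun n : ℕ => (((n:ℝ) + 1 - k) / ((n:ℝ) + 1)) ^ 2) atTop (𝓝 1) := by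
    have h0 : Tendsto (fun n : ℕ => (k:ℝ) * (1 / ((n:ℝ) + 1))) atTop (𝓝 0) := by
      simpa using tendsto_one_div_add_atTop_nhds_zero_nat.const_mul (k:ℝ)
    have h1 : Tendsto (fun n : ℕ => 1 - (k:ℝ) * (1 / ((n:ℝ) + 1))) atTop (𝓝 1) := by
      simpa using tendsto_const_nhds.sub h0
    have h2 := h1.pow 2
    rw [one_pow] at h2
    refine h2.congr fun n => ?_
    have hne : ((n:ℝ) + 1) ≠ 0 := by positivity
    field_simp
  refine tendsto_of_tendsto_of_tendsto_of_le_of_le' hlim tendsto_const_nhds ?_ ?_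
  · exact Filter.eventually_atTop.2 ⟨3 * k, hlow⟩
  · exact Filter.Eventually.of_forall hupper
end

section
/- Let c > 0 be a real constant and, for every n ≥ 0, let S_n be the grid graph on vertex set [-⌈cn^{3/2}⌉, ⌈cn^{3/2}⌉]² ⊆ ℤ². Then there exists an activator sequence v = (v_n)_{n≥0} whose lower burning density satisfies δ̲(S, v) > 0. -/
open Filter Topology

namespace Stmt7Aux
open Burning

lemma norm1_nonneg {d : ℕ} (x : Pt d) : 0 ≤ norm1 x :=
  Finset.sum_nonneg fun _ _ => abs_nonneg _

lemma abs_le_norm1 {d : ℕ} (x : Pt d) (i : Fin d) : |x i| ≤ norm1 x :=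
  Finset.single_le_sum (f := fun j => |x j|) (fun _ _ => abs_nonneg _) (Finset.mem_univ i)

lemma eq_of_norm1_le_zero {d : ℕ} {x P : Pt d} (h : norm1 (x - P) ≤ 0) : x = P := by
  funext i
  have h1 : |(x - P) i| ≤ 0 := (abs_le_norm1 _ i).trans h
  have := abs_nonneg ((x - P) i)
  have : (x - P) i = 0 := abs_eq_zero.mp (le_antisymm h1 this)
  have := sub_eq_zero.mp (by simpa [Pi.sub_apply] using this)
  exact this

lemma burnSet_subset_succ {d : ℕ} (V : ℕ → Set (Pt d)) (v : ℕ → Option (Pt d)) (n : ℕ) :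
    burnSet V v n ⊆ burnSet V v (n + 1) := fun x hx => Or.inl (Or.inl hx)

lemma burnSet_mono {d : ℕ} (V : ℕ → Set (Pt d)) (v : ℕ → Option (Pt d)) {m n : ℕ}
    (h : m ≤ n) : burnSet V v m ⊆ burnSet V v n := by
  induction n with
  | zero => simpa [Nat.le_zero.mp h] using subset_rfl
  | succ n ih =>
    rcases Nat.lt_or_ge m (n+1) with h' | h'
    · exact (ih (Nat.lt_succ_iff.mp h')).trans (burnSet_subset_succ V v n)
    · have : m = n + 1 := le_antisymm h h'
      simp [this]

lemma activated_mem {d : ℕ} (V : ℕ → Set (Pt d)) (v : ℕ → Option (Pt d)) {k : ℕ} {P : Pt d}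
    (h : v k = some P) : P ∈ burnSet V v k := by
  cases k with
  | zero => simp [burnSet, h]
  | succ k => exact Or.inr (by simp [h])

lemma exists_step {d : ℕ} {x P : Pt d} (h : 1 ≤ norm1 (x - P)) :
    ∃ y : Pt d, dist1 x y = 1 ∧ norm1 (y - P) = norm1 (x - P) - 1 := by
  have hne : ∃ i, x i ≠ P i := by
    by_contra hall
    push_neg at hall
    have hxP : x = P := funext hall
    rw [hxP] at h
    simp [norm1] at h
  obtain ⟨i, hi⟩ := hne
  set a : ℤ := x i - P i with ha
  have ha0 : a ≠ 0 := sub_ne_zero.mpr hi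
  have habs : |a - a.sign| = |a| - 1 := by
    rcases ha0.lt_or_gt with hlt | hlt
    · rw [Int.sign_eq_neg_one_of_neg hlt, abs_of_neg hlt, abs_of_nonpos (by omega)]; ring
    · rw [Int.sign_eq_one_of_pos hlt, abs_of_pos hlt, abs_of_nonneg (by omega)]
  have hsgn : |a.sign| = 1 := by
    rcases ha0.lt_or_gt with hlt | hlt
    · rw [Int.sign_eq_neg_one_of_neg hlt]; rfl
    · rw [Int.sign_eq_one_of_pos hlt]; rfl
  classical
  refine ⟨Function.update x i (x i - a.sign), ?_, ?_⟩
  · have hterm : ∀ j, |x j - Function.update x i (x i - a.sign) j|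
        = if j = i then |a.sign| else 0 := by
      intro j
      by_cases hj : j = i
      · subst hj; rw [if_pos rfl, Function.update_self]; ring_nf
      · rw [if_neg hj, Function.update_of_ne hj]; simp
    unfold dist1
    rw [Finset.sum_congr rfl (fun j _ => hterm j)]
    rw [Finset.sum_ite_eq' Finset.univ i (fun _ => |a.sign|)]
    simp [hsgn]
  · have key : ∀ j, |(Function.update x i (x i - a.sign) - P) j|
        = if j = i then |a| - 1 else |(x - P) j| := by
      intro j
      by_cases hj : j = i
      · subst hj
        rw [if_pos rfl, Pi.sub_apply, Function.update_self, sub_right_comm, ← ha, habs]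
      · rw [if_neg hj, Pi.sub_apply, Function.update_of_ne hj, Pi.sub_apply]
    unfold norm1
    rw [Finset.sum_congr rfl (fun j _ => key j)]
    rw [← Finset.add_sum_erase _ _ (Finset.mem_univ i)]
    rw [← Finset.add_sum_erase _ (fun j => |(x - P) j|) (Finset.mem_univ i)]
    rw [if_pos rfl]
    have h2 : ∑ j ∈ Finset.univ.erase i, (if j = i then |a| - 1 else |(x - P) j|)
        = ∑ j ∈ Finset.univ.erase i, |(x - P) j| := by
      refine Finset.sum_congr rfl fun j hj => ?_
      rw [if_neg (Finset.mem_erase.mp hj).1]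
    rw [h2]
    have h3 : |(x - P) i| = |a| := by rw [Pi.sub_apply, ← ha]
    rw [h3]; ring

lemma ball_subset_burn {d : ℕ} (V : ℕ → Set (Pt d)) (v : ℕ → Option (Pt d)) (k : ℕ)
    (P : Pt d) (hP : v k = some P) :
    ∀ T : ℕ, (∀ t : ℕ, t ≤ T → ball1 P (t : ℤ) ⊆ V (k + t)) →
      ball1 P (T : ℤ) ⊆ burnSet V v (k + T) := by
  intro T
  induction T with
  | zero =>
    intro _ x hx
    have hx' : x = P := eq_of_norm1_le_zero (by simpa [ball1] using hx)
    subst hx'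
    simpa using activated_mem V v hP
  | succ T ih =>
    intro hVb x hx
    have hsub : burnSet V v (k + T) ⊆ burnSet V v (k + (T + 1)) := by
      have : k + T + 1 = k + (T + 1) := by ring
      simpa [this] using burnSet_subset_succ V v (k + T)
    have hx1 : norm1 (x - P) ≤ (T : ℤ) + 1 := by
      simpa [ball1] using hx
    rcases le_or_gt (norm1 (x - P)) (T : ℤ) with hle | hgt
    · exact hsub (ih (fun t ht => hVb t (ht.trans (Nat.le_succ T))) hle)
    · have h1 : 1 ≤ norm1 (x - P) := by omega
      obtain ⟨y, hd, hn⟩ := exists_step h1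
      have hyT : y ∈ ball1 P (T : ℤ) := by
        simp only [ball1, Set.mem_setOf_eq, hn]; omega
      have hyB : y ∈ burnSet V v (k + T) :=
        ih (fun t ht => hVb t (ht.trans (Nat.le_succ T))) hyT
      have hxV : x ∈ V (k + (T + 1)) := hVb (T + 1) le_rfl (by simpa [ball1] using hx1)
      show x ∈ burnSet V v (k + (T + 1))
      have heq : k + (T + 1) = (k + T) + 1 := by ring
      rw [heq]
      exact Or.inl (Or.inr ⟨by rw [← heq]; exact hxV, y, hyB, hd⟩)

end Stmt7Aux
namespace Stmt7Aux
open Burning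

lemma sqGrid_image (a : ℤ) :
    (finTwoArrowEquiv ℤ) '' sqGrid a = ↑(Finset.Icc (-a) a ×ˢ Finset.Icc (-a) a) := by
  ext p
  rw [Set.mem_image_equiv]
  simp [sqGrid, finTwoArrowEquiv, Fin.forall_fin_two, abs_le, Finset.mem_product,
    and_assoc, and_left_comm, Prod.le_def]


lemma sqGrid_finite (a : ℤ) : (sqGrid a).Finite := by
  have h : ((finTwoArrowEquiv ℤ) '' sqGrid a).Finite := by
    rw [sqGrid_image]; exact (Finset.Icc (-a) a ×ˢ Finset.Icc (-a) a).finite_toSet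
  exact Set.Finite.of_finite_image h ((finTwoArrowEquiv ℤ).injective.injOn)

lemma sqGrid_ncard (a : ℤ) : (sqGrid a).ncard = ((2 * a + 1).toNat) ^ 2 := by
  have h := Set.ncard_image_of_injective (sqGrid a) (finTwoArrowEquiv ℤ).injective
  rw [sqGrid_image] at h
  rw [← h, Set.ncard_coe_finset, Finset.card_product, Int.card_Icc]
  have : (a + 1 - -a).toNat = (2 * a + 1).toNat := by omega
  rw [this]; ring

lemma quadGrid_image (a : ℤ) :
    (finTwoArrowEquiv ℤ) '' quadGrid a = ↑(Finset.Icc 0 a ×ˢ Finset.Icc 0 a) := by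
  ext p
  rw [Set.mem_image_equiv]
  simp [quadGrid, finTwoArrowEquiv, Fin.forall_fin_two, Finset.mem_product,
    and_assoc, and_left_comm, Prod.le_def]


lemma quadGrid_ncard (a : ℤ) : (quadGrid a).ncard = ((a + 1).toNat) ^ 2 := by
  have h := Set.ncard_image_of_injective (quadGrid a) (finTwoArrowEquiv ℤ).injective
  rw [quadGrid_image] at h
  rw [← h, Set.ncard_coe_finset, Finset.card_product, Int.card_Icc]
  have : (a + 1 - 0).toNat = (a + 1).toNat := by omega
  rw [this]; ring

lemma burn_subset_V {d : ℕ} {V : ℕ → Set (Pt d)} {v : ℕ → Option (Pt d)}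
    (hmono : Monotone V) (hact : IsActivator V v) (n : ℕ) :
    burnSet V v n ⊆ V n := by
  induction n with
  | zero =>
    cases hv : v 0 with
    | none => simp [burnSet, hv]
    | some P =>
      intro x hx
      simp only [burnSet, hv, Option.elim, Set.mem_singleton_iff] at hx
      subst hx; exact hact 0 x hv
  | succ n ih =>
    intro x hx
    rcases hx with (hx | hx) | hx
    · exact hmono (Nat.le_succ n) (ih hx)
    · exact hx.1
    · cases hv : v (n + 1) with
      | none => rw [hv] at hx; simp at hx
      | some P =>
        rw [hv] at hx
        simp only [Option.elim, Set.mem_singleton_iff] at hx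
        subst hx; exact hact (n+1) x hv

end Stmt7Aux
namespace Stmt7Aux
open Burning

/-- Spacing in block `m` (relative to threshold `M`). -/
def sAux (M m : ℕ) : ℕ := 4 ^ (m - M)

/-- Position activated at time `k`. -/
def posAux (M k : ℕ) : Pt 2 :=
  ![(sAux M (Nat.log 4 k) : ℤ) * (((k - 4 ^ Nat.log 4 k) % 2 ^ Nat.log 4 k : ℕ) : ℤ),
    (sAux M (Nat.log 4 k) : ℤ) * (((k - 4 ^ Nat.log 4 k) / 2 ^ Nat.log 4 k : ℕ) : ℤ)]

/-- The activator sequence. -/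
def vAux (M k : ℕ) : Option (Pt 2) :=
  if 4 ^ M ≤ k ∧ k < 2 * 4 ^ Nat.log 4 k then some (posAux M k) else none

/-- The key inequality: points within an activated block plus travel stay inside the grid. -/
lemma key_ineq {c : ℝ} {M : ℕ} (hc : 0 < c) (hM : 2 ≤ c * 2 ^ M)
    {m : ℕ} (hm : M ≤ m) {j t : ℕ} (hj : 4 ^ m ≤ j) (ht : t ≤ j) :
    ((sAux M m : ℤ) * 2 ^ m + (t : ℤ)) ≤ ⌈c * (j : ℝ) ^ ((3 : ℝ) / 2)⌉ := by
  set X : ℝ := 2 ^ m with hX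
  set Y : ℝ := 2 ^ M with hY
  have hX1 : (1 : ℝ) ≤ X := one_le_pow₀ (by norm_num : (1:ℝ) ≤ 2)
  have hY1 : (1 : ℝ) ≤ Y := one_le_pow₀ (by norm_num : (1:ℝ) ≤ 2)
  have hjX : (X : ℝ) ^ 2 ≤ (j : ℝ) := by
    have : ((4 ^ m : ℕ) : ℝ) ≤ (j : ℝ) := Nat.cast_le.mpr hj
    calc X ^ 2 = ((4 : ℝ)) ^ m := by rw [hX, ← pow_mul, mul_comm, pow_mul]; norm_num
      _ ≤ (j : ℝ) := by push_cast at this ⊢; linarith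
  have hj0 : (0 : ℝ) ≤ (j : ℝ) := Nat.cast_nonneg j
  have hsqX : X ≤ Real.sqrt j := by
    calc X = Real.sqrt (X ^ 2) := (Real.sqrt_sq (by linarith)).symm
      _ ≤ Real.sqrt j := Real.sqrt_le_sqrt hjX
  have hsqY : Y ≤ Real.sqrt j := by
    have hYX : Y ≤ X := by
      rw [hX, hY]; exact pow_le_pow_right₀ (by norm_num) hm
    linarith
  have hrpow : (j : ℝ) ^ ((3 : ℝ) / 2) = (j : ℝ) * Real.sqrt j := by
    rcases Nat.eq_zero_or_pos j with hj0' | hj0'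
    · exfalso; have := Nat.one_le_iff_ne_zero.mp (le_trans (Nat.one_le_iff_ne_zero.mpr (by positivity)) hj)
      omega
    · have hjpos : (0 : ℝ) < (j : ℝ) := by exact_mod_cast hj0'
      have h32 : (3 : ℝ)/2 = 1 + 1/2 := by norm_num
      rw [h32, Real.rpow_add hjpos, Real.rpow_one, Real.sqrt_eq_rpow]
  have hs : ((sAux M m : ℕ) : ℝ) * Y ^ 2 = X ^ 2 := by
    have h4 : (4 : ℝ) ^ (m - M) * 4 ^ M = 4 ^ m := by
      rw [← pow_add, Nat.sub_add_cancel hm]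
    have hY2 : Y ^ 2 = (4 : ℝ) ^ M := by rw [hY, ← pow_mul, mul_comm, pow_mul]; norm_num
    have hX2 : X ^ 2 = (4 : ℝ) ^ m := by rw [hX, ← pow_mul, mul_comm, pow_mul]; norm_num
    rw [hY2, hX2, sAux]
    push_cast
    exact h4
  -- main real inequality
  have main : ((sAux M m : ℕ) : ℝ) * X + (t : ℝ) ≤ c * (j : ℝ) ^ ((3 : ℝ) / 2) := by
    rw [hrpow]
    set A := Real.sqrt j with hA
    have hA0 : 0 ≤ A := Real.sqrt_nonneg _
    have htj : (t : ℝ) ≤ (j : ℝ) := Nat.cast_le.mpr ht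
    have hs0 : (0 : ℝ) ≤ ((sAux M m : ℕ) : ℝ) := Nat.cast_nonneg _
    -- 2 * t ≤ c * j * A  (half one)
    have h1 : 2 * (t : ℝ) ≤ c * (j : ℝ) * A := by
      have ha : 2 * (j : ℝ) ≤ (c * Y) * (j : ℝ) := mul_le_mul_of_nonneg_right hM hj0
      have h2 : (c * Y) * (j : ℝ) ≤ c * (j : ℝ) * A := by
        have := mul_le_mul_of_nonneg_left hsqY (mul_nonneg hc.le hj0)
        nlinarith
      linarith
    -- 2 * (s * X) ≤ c * j * A  (half two)
    have h3 : 2 * (((sAux M m : ℕ) : ℝ) * X) ≤ c * (j : ℝ) * A := by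
      have hcY2 : 2 ≤ c * Y ^ 2 := by nlinarith
      have hsX0 : (0 : ℝ) ≤ ((sAux M m : ℕ) : ℝ) * X := mul_nonneg hs0 (by linarith)
      have e1 : 2 * (((sAux M m : ℕ) : ℝ) * X) ≤ c * Y ^ 2 * (((sAux M m : ℕ) : ℝ) * X) :=
        mul_le_mul_of_nonneg_right hcY2 hsX0
      have e2 : c * Y ^ 2 * (((sAux M m : ℕ) : ℝ) * X) = c * (X ^ 2 * X) := by
        rw [← hs]; ring
      have e3 : c * (X ^ 2 * X) ≤ c * (j : ℝ) * A := by
        have h5 : X ^ 2 * X ≤ (j : ℝ) * A :=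
          mul_le_mul hjX hsqX (by linarith) hj0
        have := mul_le_mul_of_nonneg_left h5 hc.le
        linarith
      linarith
    linarith
  -- conclude via ceiling
  have hcast : (((sAux M m : ℤ) * 2 ^ m + (t : ℤ) : ℤ) : ℝ)
      = ((sAux M m : ℕ) : ℝ) * X + (t : ℝ) := by
    push_cast [hX]; ring
  have : (((sAux M m : ℤ) * 2 ^ m + (t : ℤ) : ℤ) : ℝ) ≤ ((⌈c * (j : ℝ) ^ ((3 : ℝ) / 2)⌉ : ℤ) : ℝ) := by
    rw [hcast]
    exact main.trans (Int.le_ceil _)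
  exact_mod_cast this

end Stmt7Aux
namespace Stmt7Aux
open Burning

lemma round_aux {s z N : ℤ} (hs : 1 ≤ s) (hz0 : 0 ≤ z) (hzN : z ≤ s * N) :
    ∃ a : ℤ, 0 ≤ a ∧ a ≤ N ∧ 2 * |z - s * a| ≤ s := by
  set D : ℤ := 2 * s with hD
  refine ⟨(2 * z + s) / D, ?_, ?_, ?_⟩
  · exact Int.ediv_nonneg (by linarith) (by linarith)
  · by_contra hcon
    push_neg at hcon
    have hstep : s * (N + 1) ≤ s * ((2 * z + s) / D) :=
      mul_le_mul_of_nonneg_left (by linarith) (by linarith)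
    have h := Int.mul_ediv_add_emod (2 * z + s) D
    have hr0 : 0 ≤ (2 * z + s) % D := Int.emod_nonneg _ (by omega : D ≠ 0)
    have hr1 : (2 * z + s) % D < D := Int.emod_lt_of_pos _ (by omega : 0 < D)
    nlinarith [h, hr0, hr1, hstep]
  · have h := Int.mul_ediv_add_emod (2 * z + s) D
    have hr0 : 0 ≤ (2 * z + s) % D := Int.emod_nonneg _ (by omega : D ≠ 0)
    have hr1 : (2 * z + s) % D < D := Int.emod_lt_of_pos _ (by omega : 0 < D)
    have habs : |2 * (z - s * ((2 * z + s) / D))| ≤ s := by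
      apply abs_le.mpr
      constructor <;> nlinarith [h, hr0, hr1]
    calc 2 * |z - s * ((2 * z + s) / D)| = |2 * (z - s * ((2 * z + s) / D))| := by
          rw [abs_mul]; simp
      _ ≤ s := habs

lemma digit_lt {d a b : ℕ} (hd : 0 < d) (ha : a < d) (hb : b < d) : a + d * b < d * d := by
  calc a + d * b < d + d * b := by omega
    _ = d * (1 + b) := by ring
    _ ≤ d * d := Nat.mul_le_mul_left d (by omega)

lemma four_pow_eq (m : ℕ) : (4 : ℕ) ^ m = 2 ^ m * 2 ^ m := by
  rw [← mul_pow]; norm_num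

lemma vAux_mem {c : ℝ} {M : ℕ} (hc : 0 < c) (hM : 2 ≤ c * 2 ^ M)
    {k : ℕ} (h1 : 4 ^ M ≤ k) (h2 : k < 2 * 4 ^ Nat.log 4 k) :
    posAux M k ∈ sqGrid ⌈c * (k : ℝ) ^ ((3 : ℝ) / 2)⌉ := by
  set m := Nat.log 4 k with hm
  have hk0 : k ≠ 0 := by
    have : (0:ℕ) < 4 ^ M := Nat.pow_pos (by norm_num)
    omega
  have hMm : M ≤ m := by
    have := Nat.log_mono_right (b := 4) h1
    rwa [Nat.log_pow (by norm_num)] at this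
  have hpow : 4 ^ m ≤ k := Nat.pow_log_le_self 4 hk0
  have h2m : (0:ℕ) < 2 ^ m := Nat.pow_pos (by norm_num)
  set j1 := (k - 4 ^ m) % 2 ^ m with hj1
  set j2 := (k - 4 ^ m) / 2 ^ m with hj2
  have hj1lt : j1 < 2 ^ m := Nat.mod_lt _ h2m
  have hj2lt : j2 < 2 ^ m := by
    rw [hj2, Nat.div_lt_iff_lt_mul h2m, ← four_pow_eq]
    omega
  have key : ∀ r : ℕ, r < 2 ^ m → |(sAux M m : ℤ) * (r : ℤ)| ≤ ⌈c * (k : ℝ) ^ ((3 : ℝ) / 2)⌉ := by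
    intro r hr
    have hnn : (0:ℤ) ≤ (sAux M m : ℤ) * (r : ℤ) :=
      mul_nonneg (Int.natCast_nonneg _) (Int.natCast_nonneg _)
    rw [abs_of_nonneg hnn]
    have hle : (sAux M m : ℤ) * (r : ℤ) ≤ (sAux M m : ℤ) * 2 ^ m := by
      apply mul_le_mul_of_nonneg_left _ (Int.natCast_nonneg _)
      exact_mod_cast hr.le
    have := key_ineq hc hM hMm hpow (Nat.zero_le k)
    simpa using hle.trans (by simpa using this)
  intro i
  fin_cases i <;> simp only [posAux, ← hm, Matrix.cons_val_zero, Matrix.cons_val_one, Matrix.head_cons]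
  · exact key j1 hj1lt
  · exact key j2 hj2lt

lemma vAux_activator {c : ℝ} {M : ℕ} (hc : 0 < c) (hM : 2 ≤ c * 2 ^ M)
    (V : ℕ → Set (Pt 2)) (hV : ∀ n : ℕ, V n = sqGrid ⌈c * (n : ℝ) ^ ((3 : ℝ) / 2)⌉) :
    IsActivator V (vAux M) := by
  intro n x h
  rw [vAux] at h
  by_cases hcond : 4 ^ M ≤ n ∧ n < 2 * 4 ^ Nat.log 4 n
  · rw [if_pos hcond] at h
    cases h
    rw [hV]
    exact vAux_mem hc hM hcond.1 hcond.2
  · rw [if_neg hcond] at h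
    cases h

end Stmt7Aux
namespace Stmt7Aux
open Burning

lemma cover {c : ℝ} {M : ℕ} (hc : 0 < c) (hM : 2 ≤ c * 2 ^ M)
    (V : ℕ → Set (Pt 2)) (hV : ∀ n : ℕ, V n = sqGrid ⌈c * (n : ℝ) ^ ((3 : ℝ) / 2)⌉)
    {n m : ℕ} (hm : M ≤ m) (hn1 : 4 ^ (m + 1) ≤ n) (hn2 : n < 4 ^ (m + 2)) :
    quadGrid ((sAux M m : ℤ) * (2 ^ m - 1)) ⊆ burnSet V (vAux M) n := by
  intro x hx
  set s : ℤ := (sAux M m : ℤ) with hsdef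
  have hs1 : (1:ℤ) ≤ s := by
    rw [hsdef, sAux]
    exact_mod_cast Nat.one_le_pow _ _ (by norm_num)
  have h2m : (0:ℕ) < 2 ^ m := Nat.pow_pos (by norm_num)
  have hN0 : (0:ℤ) ≤ (2:ℤ) ^ m - 1 := by
    have : (1:ℤ) ≤ 2 ^ m := one_le_pow₀ (by norm_num : (1:ℤ) ≤ 2)
    linarith
  -- round each coordinate
  obtain ⟨a, ha0, haN, haerr⟩ := round_aux (N := (2:ℤ) ^ m - 1) hs1 (hx 0).1 (hx 0).2
  obtain ⟨b, hb0, hbN, hberr⟩ := round_aux (N := (2:ℤ) ^ m - 1) hs1 (hx 1).1 (hx 1).2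
  -- the activation time k
  have haNat : (a.toNat : ℤ) = a := Int.toNat_of_nonneg ha0
  have hbNat : (b.toNat : ℤ) = b := Int.toNat_of_nonneg hb0
  have haLt : a.toNat < 2 ^ m := by
    have h' : (a.toNat : ℤ) < ((2 ^ m : ℕ) : ℤ) := by rw [haNat]; push_cast; linarith
    exact_mod_cast h'
  have hbLt : b.toNat < 2 ^ m := by
    have h' : (b.toNat : ℤ) < ((2 ^ m : ℕ) : ℤ) := by rw [hbNat]; push_cast; linarith
    exact_mod_cast h'
  set j : ℕ := a.toNat + 2 ^ m * b.toNat with hjdef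
  have hjlt : j < 4 ^ m := by
    rw [four_pow_eq]
    exact digit_lt h2m haLt hbLt
  set k : ℕ := 4 ^ m + j with hkdef
  have hk1 : 4 ^ m ≤ k := Nat.le_add_right _ _
  have hk2 : k < 2 * 4 ^ m := by omega
  have hlog : Nat.log 4 k = m := by
    apply Nat.log_eq_of_pow_le_of_lt_pow hk1
    calc k < 2 * 4 ^ m := hk2
      _ ≤ 4 ^ (m + 1) := by rw [pow_succ]; omega
  have hkn : k ≤ n := by
    have : 4 ^ (m+1) = 4 * 4 ^ m := by rw [pow_succ]; ring
    omega
  -- the activated point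
  have hvk : vAux M k = some (posAux M k) := by
    rw [vAux, if_pos]
    refine ⟨le_trans (Nat.pow_le_pow_right (by norm_num) hm) hk1, ?_⟩
    rw [hlog]; exact hk2
  have hmod : (k - 4 ^ m) % 2 ^ m = a.toNat := by
    rw [hkdef, Nat.add_sub_cancel_left, hjdef, Nat.add_mul_mod_self_left,
      Nat.mod_eq_of_lt haLt]
  have hdiv : (k - 4 ^ m) / 2 ^ m = b.toNat := by
    rw [hkdef, Nat.add_sub_cancel_left, hjdef, Nat.add_mul_div_left _ _ h2m,
      Nat.div_eq_of_lt haLt, Nat.zero_add]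
  have hP : posAux M k = ![s * a, s * b] := by
    rw [posAux, hlog, hmod, hdiv, haNat, hbNat]
  -- norm bound : x is within distance s of the activated point
  have hnorm : ∀ y : Pt 2, norm1 (y - posAux M k) = |y 0 - s * a| + |y 1 - s * b| := by
    intro y
    rw [hP, norm1, Fin.sum_univ_two]
    simp [Pi.sub_apply]
  have hxnorm : norm1 (x - posAux M k) ≤ s := by
    rw [hnorm]
    linarith
  -- coordinates of the activated point are bounded
  have hPbound : ∀ i, 0 ≤ posAux M k i ∧ posAux M k i ≤ s * ((2:ℤ) ^ m - 1) := by
    rw [hP]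
    intro i
    fin_cases i <;>
      simp only [Matrix.cons_val_zero, Matrix.cons_val_one, Matrix.head_cons]
    · exact ⟨mul_nonneg (by linarith) ha0, mul_le_mul_of_nonneg_left haN (by linarith)⟩
    · exact ⟨mul_nonneg (by linarith) hb0, mul_le_mul_of_nonneg_left hbN (by linarith)⟩
  -- ball stays inside the growing grids
  have hVb : ∀ t : ℕ, t ≤ n - k → ball1 (posAux M k) (t : ℤ) ⊆ V (k + t) := by
    intro t _ y hy
    rw [hV]
    intro i
    have h1 : |y i - posAux M k i| ≤ norm1 (y - posAux M k) := by
      have := abs_le_norm1 (y - posAux M k) i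
      simpa [Pi.sub_apply] using this
    have h2 : norm1 (y - posAux M k) ≤ (t:ℤ) := hy
    have h3 := (hPbound i).1
    have h4 := (hPbound i).2
    have key := key_ineq hc hM hm (j := k + t) (Nat.le_add_right_of_le hk1)
      (Nat.le_add_left t k)
    have hsm : s * ((2:ℤ)^m - 1) ≤ s * 2 ^ m := by nlinarith
    have h6 := abs_le.mp (h1.trans h2)
    have ht0 : (0:ℤ) ≤ (t:ℤ) := Int.natCast_nonneg t
    have h5 : |y i| ≤ s * 2 ^ m + (t:ℤ) := by
      rw [abs_le]
      constructor <;> linarith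
    exact le_trans h5 key
  -- x is in the ball of radius n - k
  have hxball : x ∈ ball1 (posAux M k) ((n - k : ℕ) : ℤ) := by
    have hnk : 2 * 4 ^ m ≤ n - k := by
      have : 4 ^ (m+1) = 4 * 4 ^ m := by rw [pow_succ]; ring
      omega
    have hs4 : s ≤ ((4:ℕ) ^ m : ℤ) := by
      rw [hsdef, sAux]
      exact_mod_cast Nat.pow_le_pow_right (by norm_num) (Nat.sub_le m M)
    show norm1 (x - posAux M k) ≤ ((n - k : ℕ) : ℤ)
    have h7 : ((4:ℕ) ^ m : ℤ) ≤ ((n - k : ℕ) : ℤ) := by exact_mod_cast by omega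
    linarith
  have := ball_subset_burn V (vAux M) k (posAux M k) hvk (n - k) hVb hxball
  rwa [Nat.add_sub_cancel' hkn] at this

end Stmt7Aux
namespace Stmt7Aux
open Burning

lemma V_mono {c : ℝ} (hc : 0 < c)
    (V : ℕ → Set (Pt 2)) (hV : ∀ n : ℕ, V n = sqGrid ⌈c * (n : ℝ) ^ ((3 : ℝ) / 2)⌉) :
    Monotone V := by
  intro i j hij x hx
  rw [hV] at hx ⊢
  intro idx
  refine le_trans (hx idx) (Int.ceil_le_ceil ?_)
  apply mul_le_mul_of_nonneg_left _ hc.le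
  exact Real.rpow_le_rpow (Nat.cast_nonneg i) (Nat.cast_le.mpr hij) (by norm_num)

lemma density_lower {c : ℝ} {M : ℕ} (hc : 0 < c) (hM : 2 ≤ c * 2 ^ M)
    (V : ℕ → Set (Pt 2)) (hV : ∀ n : ℕ, V n = sqGrid ⌈c * (n : ℝ) ^ ((3 : ℝ) / 2)⌉)
    {n : ℕ} (hn : 4 ^ (M + 2) ≤ n) :
    1 / (16384 * 16 ^ M * (2 * c + 3) ^ 2) ≤ densitySeq V (vAux M) n := by
  have hn0 : n ≠ 0 := by
    have : (0:ℕ) < 4 ^ (M+2) := Nat.pow_pos (by norm_num)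
    omega
  have hn1' : 1 ≤ n := Nat.one_le_iff_ne_zero.mpr hn0
  have hlogn : M + 2 ≤ Nat.log 4 n := by
    have := Nat.log_mono_right (b := 4) hn
    rwa [Nat.log_pow (by norm_num)] at this
  set m := Nat.log 4 n - 1 with hmdef
  have hm1 : m + 1 = Nat.log 4 n := by omega
  have hmM : M + 1 ≤ m := by omega
  have hn1 : 4 ^ (m + 1) ≤ n := by rw [hm1]; exact Nat.pow_log_le_self 4 hn0
  have hn2 : n < 4 ^ (m + 2) := by
    have h0 := Nat.lt_pow_succ_log_self (by norm_num : 1 < 4) n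
    have h' : Nat.log 4 n + 1 = m + 2 := by omega
    calc n < 4 ^ (Nat.log 4 n + 1) := by simpa [Nat.succ_eq_add_one] using h0
      _ = 4 ^ (m + 2) := by rw [h']
  set L : ℤ := (sAux M m : ℤ) * (2 ^ m - 1) with hLdef
  have hcover : quadGrid L ⊆ burnSet V (vAux M) n :=
    cover hc hM V hV (by omega : M ≤ m) hn1 hn2
  have hVfin : (V n).Finite := by rw [hV]; exact sqGrid_finite _
  have hBsub : burnSet V (vAux M) n ⊆ V n :=
    burn_subset_V (V_mono hc V hV) (vAux_activator hc hM V hV) n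
  have hBfin : (burnSet V (vAux M) n).Finite := hVfin.subset hBsub
  have hQB : (quadGrid L).ncard ≤ (burnSet V (vAux M) n).ncard :=
    Set.ncard_le_ncard hcover hBfin
  have hs1 : (1:ℤ) ≤ (sAux M m : ℤ) := by
    rw [sAux]; exact_mod_cast Nat.one_le_pow _ _ (by norm_num)
  have h2m1 : (2:ℤ) ≤ (2:ℤ) ^ m := by
    calc (2:ℤ) = 2^1 := by norm_num
      _ ≤ 2^m := pow_le_pow_right₀ (by norm_num) (by omega)
  have hL0 : (0:ℤ) ≤ L := by
    rw [hLdef]; exact mul_nonneg (by linarith) (by linarith)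
  have hL2 : (sAux M m : ℤ) * 2 ^ m ≤ 2 * (L + 1) := by
    rw [hLdef]
    have : (sAux M m : ℤ) * 2 ≤ (sAux M m : ℤ) * 2 ^ m :=
      mul_le_mul_of_nonneg_left h2m1 (by linarith)
    nlinarith
  -- real quantities
  set W : ℝ := (n:ℝ) ^ ((3:ℝ)/2) with hWdef
  have hW1 : (1:ℝ) ≤ W := by
    rw [hWdef]
    exact Real.one_le_rpow (by exact_mod_cast hn1') (by norm_num)
  have hW0 : (0:ℝ) ≤ W := by linarith
  set T3 : ℝ := (n:ℝ) ^ (3:ℕ) with hT3def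
  have hnR : (0:ℝ) < (n:ℝ) := by exact_mod_cast Nat.pos_of_ne_zero hn0
  have hT3pos : (0:ℝ) < T3 := by rw [hT3def]; positivity
  have hWsq : W ^ 2 = T3 := by
    rw [hWdef, hT3def, ← Real.rpow_natCast ((n:ℝ) ^ ((3:ℝ)/2)) 2,
      ← Real.rpow_mul (Nat.cast_nonneg n), ← Real.rpow_natCast (n:ℝ) 3]
    norm_num
  -- upper bound on |V n|
  set R : ℤ := ⌈c * (n:ℝ) ^ ((3:ℝ)/2)⌉ with hRdef
  have hR0 : (0:ℤ) ≤ R := Int.ceil_nonneg (by positivity)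
  have hVcard : ((V n).ncard : ℝ) ≤ (2*c+3)^2 * T3 := by
    rw [hV, sqGrid_ncard]
    have hRW : ((R:ℤ):ℝ) < c * W + 1 := by
      rw [hRdef, hWdef]; exact Int.ceil_lt_add_one _
    have hb : ((2*R+1 : ℤ) : ℝ) ≤ (2*c+3) * W := by
      push_cast
      nlinarith
    have hb0 : (0:ℝ) ≤ ((2*R+1 : ℤ) : ℝ) := by
      have : (0:ℤ) ≤ 2*R+1 := by omega
      exact_mod_cast this
    calc (((2*R+1).toNat ^ 2 : ℕ) : ℝ) = ((2*R+1 : ℤ) : ℝ)^2 := by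
          have hZ : (((2*R+1).toNat : ℤ)) = 2*R+1 := Int.toNat_of_nonneg (by omega)
          rw [← hZ]; push_cast [Int.toNat_natCast]; ring
      _ ≤ ((2*c+3) * W)^2 := by nlinarith
      _ = (2*c+3)^2 * T3 := by rw [mul_pow, hWsq]
  -- lower bound on |quadGrid L|
  set F : ℝ := (16:ℝ) ^ M with hFdef
  have hFpos : (0:ℝ) < F := by rw [hFdef]; positivity
  set SX : ℝ := ((sAux M m : ℕ) : ℝ) * 2 ^ m with hSXdef
  have hSX0 : (0:ℝ) ≤ SX := by rw [hSXdef]; positivity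
  have hE : SX ^ 2 * F = (64:ℝ) ^ m := by
    have h1 : ((4:ℝ) ^ (m - M))^2 = (16:ℝ) ^ (m - M) := by
      rw [← pow_mul, mul_comm, pow_mul]; norm_num
    have h2 : ((2:ℝ) ^ m)^2 = (4:ℝ) ^ m := by
      rw [← pow_mul, mul_comm, pow_mul]; norm_num
    rw [hSXdef, hFdef, sAux]
    push_cast
    rw [mul_pow, h1, h2]
    calc (16:ℝ) ^ (m - M) * 4 ^ m * 16 ^ M
        = ((16:ℝ) ^ (m - M) * 16 ^ M) * 4 ^ m := by ring
      _ = (16:ℝ) ^ m * 4 ^ m := by rw [← pow_add, Nat.sub_add_cancel (by omega : M ≤ m)]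
      _ = (64:ℝ) ^ m := by rw [← mul_pow]; norm_num
  have hT3lt : T3 ≤ 4096 * (64:ℝ) ^ m := by
    have hcast : (n:ℝ) ≤ (4:ℝ) ^ (m+2) := by exact_mod_cast hn2.le
    have hc3 : ((4:ℝ) ^ (m+2))^3 = 4096 * (64:ℝ) ^ m := by
      rw [← pow_mul]
      have he : (m+2)*3 = 3*m + 6 := by ring
      rw [he, pow_add]
      have h4 : (4:ℝ)^(3*m) = 64 ^ m := by rw [pow_mul]; norm_num
      rw [h4]; norm_num; ring
    calc T3 = (n:ℝ)^(3:ℕ) := hT3def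
      _ ≤ ((4:ℝ) ^ (m+2))^3 := pow_le_pow_left₀ hnR.le hcast 3
      _ = 4096 * (64:ℝ) ^ m := hc3
  have hQcard : T3 / (16384 * F) ≤ ((quadGrid L).ncard : ℝ) := by
    rw [quadGrid_ncard]
    set L1 : ℝ := ((L + 1 : ℤ) : ℝ) with hL1def
    have hcard : (((L+1).toNat ^ 2 : ℕ) : ℝ) = L1^2 := by
      have hZ : (((L+1).toNat : ℤ)) = L+1 := Int.toNat_of_nonneg (by omega)
      rw [hL1def, ← hZ]; push_cast [Int.toNat_natCast]; ring
    rw [hcard]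
    have hhalf : SX ≤ 2 * L1 := by
      have : ((((sAux M m : ℤ)) * 2 ^ m : ℤ) : ℝ) ≤ ((2 * (L + 1) : ℤ) : ℝ) := by
        exact_mod_cast hL2
      rw [hSXdef, hL1def]
      push_cast at this ⊢
      linarith
    have hL10 : (0:ℝ) ≤ L1 := by
      rw [hL1def]; exact_mod_cast (by omega : (0:ℤ) ≤ L+1)
    rw [div_le_iff₀ (by positivity)]
    have h10 : SX^2 ≤ 4 * L1^2 := by nlinarith
    have h11 : SX^2 * F ≤ 4 * L1^2 * F := mul_le_mul_of_nonneg_right h10 hFpos.le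
    rw [hE] at h11
    linarith
  -- assemble
  have hVpos : (0:ℝ) < ((V n).ncard : ℝ) := by
    have hne : (V n).Nonempty := by
      refine ⟨0, ?_⟩
      rw [hV]
      intro i
      simp only [Pi.zero_apply, abs_zero]
      exact hR0
    have := (Set.ncard_pos hVfin).mpr hne
    exact_mod_cast this
  rw [densitySeq, le_div_iff₀ hVpos]
  have h2c3 : (0:ℝ) < 2*c+3 := by linarith
  have hεpos : (0:ℝ) < 1 / (16384 * 16 ^ M * (2 * c + 3) ^ 2) := by positivity
  calc 1 / (16384 * 16 ^ M * (2 * c + 3) ^ 2) * ((V n).ncard : ℝ)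
      ≤ 1 / (16384 * 16 ^ M * (2 * c + 3) ^ 2) * ((2*c+3)^2 * T3) :=
        mul_le_mul_of_nonneg_left hVcard hεpos.le
    _ = T3 / (16384 * F) := by
        rw [hFdef]; field_simp
    _ ≤ ((quadGrid L).ncard : ℝ) := hQcard
    _ ≤ ((burnSet V (vAux M) n).ncard : ℝ) := by exact_mod_cast hQB

end Stmt7Aux
open Burning in
/-- for `c > 0` and grids `S_n = [-⌈c n^{3/2}⌉, ⌈c n^{3/2}⌉]²`, there is
an activator sequence with positive lower burning density. -/
theorem stmt7 (c : ℝ) (hc : 0 < c)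
    (V : ℕ → Set (Pt 2))
    (hV : ∀ n : ℕ, V n = sqGrid ⌈c * (n : ℝ) ^ ((3 : ℝ) / 2)⌉) :
    ∃ v : ℕ → Option (Pt 2),
      IsActivator V v ∧
      0 < Filter.liminf (densitySeq V v) Filter.atTop := by
  obtain ⟨M, hM⟩ : ∃ M : ℕ, 2 ≤ c * 2 ^ M := by
    obtain ⟨M, hM⟩ := pow_unbounded_of_one_lt (2 / c) (by norm_num : (1:ℝ) < 2)
    exact ⟨M, by rw [div_lt_iff₀ hc] at hM; linarith⟩
  refine ⟨Stmt7Aux.vAux M, Stmt7Aux.vAux_activator hc hM V hV, ?_⟩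
  have hεpos : (0:ℝ) < 1 / (16384 * 16 ^ M * (2 * c + 3) ^ 2) := by positivity
  have hbound : ∀ n, densitySeq V (Stmt7Aux.vAux M) n ≤ 1 := by
    intro n
    rw [densitySeq]
    apply div_le_one_of_le₀
    · have hfin : (V n).Finite := by rw [hV]; exact Stmt7Aux.sqGrid_finite _
      exact_mod_cast Set.ncard_le_ncard
        (Stmt7Aux.burn_subset_V (Stmt7Aux.V_mono hc V hV)
          (Stmt7Aux.vAux_activator hc hM V hV) n) hfin
    · positivity
  have hcb : Filter.IsBoundedUnder (· ≤ ·) Filter.atTop (densitySeq V (Stmt7Aux.vAux M)) :=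
    ⟨1, by
      rw [Filter.eventually_map]
      exact Filter.Eventually.of_forall hbound⟩
  have hlim : 1 / (16384 * 16 ^ M * (2 * c + 3) ^ 2)
      ≤ Filter.liminf (densitySeq V (Stmt7Aux.vAux M)) Filter.atTop :=
    Filter.le_liminf_of_le hcb.isCoboundedUnder_ge
      (Filter.eventually_atTop.mpr
        ⟨4 ^ (M + 2), fun n hn => Stmt7Aux.density_lower hc hM V hV hn⟩)
  exact lt_of_lt_of_le hεpos hlim
end

section
/- Let d ≥ 2 be an integer, let x, y, r be nonnegative integers, and let P ∈ ℤ^d with ‖P‖₁ = r. Suppose r ≤ x + y, y ≤ r + x, x ≤ r + y, and x + y − r ≥ 2d. Then |S₁(0, x) ∩ B₁(P, y)| ≥ (1/(d−1)!) ((x+y−r)/2 − d)^{d−1}. -/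
open Filter Topology

private lemma exists_le_sum_aux {ι : Type*} [Fintype ι] [DecidableEq ι] (q : ι → ℕ) :
    ∀ j n, n + j = ∑ i, q i → ∃ g : ι → ℕ, (∀ i, g i ≤ q i) ∧ ∑ i, g i = n := by
  intro j
  induction j with
  | zero => intro n hn; exact ⟨q, fun i => le_rfl, by omega⟩
  | succ j ih =>
    intro n hn
    obtain ⟨g, hg, hsum⟩ := ih (n + 1) (by omega)
    have hpos : ∑ i, g i ≠ 0 := by omega
    obtain ⟨i0, -, hi0⟩ := Finset.exists_ne_zero_of_sum_ne_zero hpos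
    refine ⟨Function.update g i0 (g i0 - 1), ?_, ?_⟩
    · intro i
      rcases eq_or_ne i i0 with rfl | h
      · simpa using le_trans (Nat.sub_le _ _) (hg _)
      · simpa [Function.update_of_ne h] using hg i
    · rw [Finset.sum_update_of_mem (Finset.mem_univ _)]
      have h2 : g i0 + ∑ x ∈ Finset.univ.erase i0, g x = ∑ x, g x :=
        Finset.add_sum_erase _ _ (Finset.mem_univ _)
      rw [Finset.sdiff_singleton_eq_erase]
      omega

private lemma exists_base {d : ℕ} (hd : 0 < d) (q : Fin d → ℕ) (n : ℕ) :
    ∃ g : Fin d → ℕ, ∑ i, g i = n ∧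
      ∑ i, |(g i : ℤ) - (q i : ℤ)| = |(n : ℤ) - (∑ i, q i : ℕ)| := by
  set r := ∑ i, q i with hr
  rcases le_or_gt n r with h | h
  · obtain ⟨g, hg, hsum⟩ := exists_le_sum_aux q (r - n) n (by omega)
    refine ⟨g, hsum, ?_⟩
    have habs : ∀ i, |(g i : ℤ) - (q i : ℤ)| = (q i : ℤ) - (g i : ℤ) := by
      intro i
      rw [abs_sub_comm]
      exact abs_of_nonneg (by have := hg i; push_cast; omega)
    rw [Finset.sum_congr rfl fun i _ => habs i, Finset.sum_sub_distrib]
    have h1 : ((∑ i, q i : ℕ) : ℤ) = (r : ℤ) := by rw [hr]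
    have h2 : ∑ i, ((q i : ℕ) : ℤ) = ((∑ i, q i : ℕ) : ℤ) := by push_cast; ring
    have h3 : ∑ i, ((g i : ℕ) : ℤ) = ((n : ℕ) : ℤ) := by rw [← hsum]; push_cast; ring
    rw [h2, h3, abs_of_nonpos (by push_cast; omega)]
    rw [h1]
    push_cast
    ring
  · set i0 : Fin d := ⟨0, hd⟩
    refine ⟨Function.update q i0 (q i0 + (n - r)), ?_, ?_⟩
    · rw [Finset.sum_update_of_mem (Finset.mem_univ _), Finset.sdiff_singleton_eq_erase]
      have h2 : q i0 + ∑ x ∈ Finset.univ.erase i0, q x = ∑ x, q x :=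
        Finset.add_sum_erase _ _ (Finset.mem_univ _)
      omega
    · have habs : ∀ i, |((Function.update q i0 (q i0 + (n - r)) i : ℕ) : ℤ) - (q i : ℤ)| =
          if i = i0 then ((n : ℤ) - r) else 0 := by
        intro i
        rcases eq_or_ne i i0 with rfl | hne
        · simp only [Function.update_self, if_pos rfl]
          rw [abs_of_nonneg (by push_cast; omega)]
          push_cast; omega
        · simp [Function.update_of_ne hne, hne]
      rw [Finset.sum_congr rfl fun i _ => habs i]
      rw [Finset.sum_ite_eq' Finset.univ i0 (fun _ => ((n : ℤ) - r))]
      simp only [Finset.mem_univ, if_pos]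
      rw [abs_of_nonneg (by push_cast; omega)]

private lemma card_simplex (k M : ℕ) :
    (M + k).choose k ≤
      ((Fintype.piFinset fun _ : Fin k => Finset.range (M + 1)).filter
        fun t => ∑ i, t i ≤ M).card := by
  classical
  have hcard : Fintype.card (Sym (Fin (k + 1)) M) = (M + k).choose k := by
    rw [Sym.card_sym_eq_choose, Fintype.card_fin]
    have h1 : k + 1 + M - 1 = k + M := by omega
    rw [h1]
    have h2 : (k + M).choose M = (k + M).choose ((k + M) - k) := by
      congr 1; omega
    rw [h2, Nat.choose_symm (Nat.le_add_right k M), Nat.add_comm]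
  rw [← hcard, ← Finset.card_univ]
  have hsumcount : ∀ m : Sym (Fin (k + 1)) M,
      ∑ i : Fin (k + 1), Multiset.count i (m : Multiset (Fin (k + 1))) = M := by
    intro m
    have h2 := m.2
    conv_rhs => rw [← h2]
    rw [← Multiset.toFinset_sum_count_eq]
    exact (Finset.sum_subset (Finset.subset_univ _) (fun i _ hi => by
      simpa [Multiset.count_eq_zero] using hi)).symm
  refine Finset.card_le_card_of_injOn
    (fun m => fun i : Fin k => Multiset.count i.castSucc (m : Multiset (Fin (k + 1)))) ?_ ?_
  · intro m _
    simp only [Finset.mem_coe, Finset.mem_filter, Fintype.mem_piFinset, Finset.mem_range]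
    constructor
    · intro i
      have := Multiset.count_le_card i.castSucc (m : Multiset (Fin (k + 1)))
      have hc : Multiset.card (m : Multiset (Fin (k + 1))) = M := m.2
      omega
    · have h := hsumcount m
      rw [Fin.sum_univ_castSucc] at h
      omega
  · intro m1 _ m2 _ hfe
    have hcs : ∀ i : Fin k, Multiset.count i.castSucc (m1 : Multiset (Fin (k + 1))) =
        Multiset.count i.castSucc (m2 : Multiset (Fin (k + 1))) := fun i => congrFun hfe i
    have hlast : Multiset.count (Fin.last k) (m1 : Multiset (Fin (k + 1))) =
        Multiset.count (Fin.last k) (m2 : Multiset (Fin (k + 1))) := by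
      have h1 := hsumcount m1
      have h2 := hsumcount m2
      rw [Fin.sum_univ_castSucc] at h1 h2
      rw [Finset.sum_congr rfl fun i _ => hcs i] at h1
      omega
    have : (m1 : Multiset (Fin (k + 1))) = (m2 : Multiset (Fin (k + 1))) := by
      ext a
      induction a using Fin.lastCases with
      | last => exact hlast
      | cast i => exact hcs i
    exact Subtype.ext this

open Burning in
/-- for `d ≥ 2`, nonnegative integers `x, y, r`, and `P ∈ ℤ^d` with
`‖P‖₁ = r`, if `r ≤ x + y`, `y ≤ r + x`, `x ≤ r + y` and `x + y − r ≥ 2d`, then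
`|S₁(0, x) ∩ B₁(P, y)| ≥ (1/(d−1)!) ((x+y−r)/2 − d)^{d−1}`. -/
theorem stmt15 (d : ℕ) (hd : 2 ≤ d) (x y r : ℕ) (P : Pt d)
    (hP : norm1 P = (r : ℤ))
    (h₁ : r ≤ x + y) (h₂ : y ≤ r + x) (h₃ : x ≤ r + y)
    (h₄ : 2 * d + r ≤ x + y) :
    (1 / ((d - 1).factorial : ℝ)) *
        (((x : ℝ) + (y : ℝ) - (r : ℝ)) / 2 - (d : ℝ)) ^ (d - 1) ≤
      ((sphere1 (0 : Pt d) (x : ℤ) ∩ ball1 P (y : ℤ)).ncard : ℝ) := by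
  classical
  obtain ⟨k, rfl⟩ : ∃ k, d = k + 1 := ⟨d - 1, by omega⟩
  set ε : Fin (k + 1) → ℤ := fun i => if P i < 0 then -1 else 1 with hεdef
  set q : Fin (k + 1) → ℕ := fun i => (P i).natAbs with hqdef
  have hPi : ∀ i, P i = ε i * (q i : ℤ) := by
    intro i
    simp only [hεdef, hqdef]
    rcases lt_or_ge (P i) 0 with h | h
    · rw [if_pos h]; omega
    · rw [if_neg (not_lt.2 h)]; omega
  have hεabs : ∀ i, |ε i| = 1 := by
    intro i
    simp only [hεdef]
    split <;> simp
  have hεne : ∀ i, ε i ≠ 0 := by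
    intro i
    simp only [hεdef]
    split <;> simp
  have hqr : ∑ i, q i = r := by
    have h0 : ((∑ i, q i : ℕ) : ℤ) = (r : ℤ) := by
      rw [← hP]
      unfold norm1
      push_cast
      exact Finset.sum_congr rfl fun i _ => by simp [hqdef]
    exact_mod_cast h0
  set M := (x + y - r - 2 * (k + 1)) / 2 with hMdef
  have hM1 : 2 * M + r + 2 * (k + 1) ≤ x + y := by omega
  have hM2 : x + y ≤ 2 * M + r + 2 * (k + 1) + 1 := by omega
  have hMx : M + (k + 1) ≤ x := by omega
  obtain ⟨g, hgsum, hgabs⟩ := exists_base (d := k + 1) (by omega) q (x - M)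
  rw [hqr] at hgabs
  -- the parametrized family
  set e : (Fin k → ℕ) → Fin (k + 1) → ℕ := fun t => Fin.snoc t (M - ∑ j, t j) with hedef
  set F : (Fin k → ℕ) → Pt (k + 1) := fun t i => ε i * ((g i : ℤ) + (e t i : ℤ)) with hFdef
  set T : Finset (Fin k → ℕ) :=
    (Fintype.piFinset fun _ : Fin k => Finset.range (M + 1)).filter
      (fun t => ∑ i, t i ≤ M) with hTdef
  have hesum : ∀ t ∈ T, ∑ i, e t i = M := by
    intro t ht
    have hts : ∑ i, t i ≤ M := (Finset.mem_filter.1 ht).2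
    simp only [hedef]
    rw [Fin.sum_univ_castSucc]
    simp only [Fin.snoc_castSucc, Fin.snoc_last]
    omega
  have hmem : ∀ t ∈ T, F t ∈ sphere1 (0 : Pt (k + 1)) (x : ℤ) ∩ ball1 P (y : ℤ) := by
    intro t ht
    constructor
    · show norm1 (F t - 0) = (x : ℤ)
      rw [sub_zero]
      unfold norm1
      have : ∀ i, |F t i| = ((g i + e t i : ℕ) : ℤ) := by
        intro i
        simp only [hFdef]
        rw [abs_mul, hεabs, one_mul, abs_of_nonneg (by positivity)]
        push_cast; ring
      rw [Finset.sum_congr rfl fun i _ => this i, ← Nat.cast_sum]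
      have : ∑ i, (g i + e t i) = x := by
        rw [Finset.sum_add_distrib, hgsum, hesum t ht]; omega
      rw [this]
    · show norm1 (F t - P) ≤ (y : ℤ)
      unfold norm1
      have hterm : ∀ i, |(F t - P) i| ≤ |(g i : ℤ) - (q i : ℤ)| + (e t i : ℤ) := by
        intro i
        have : (F t - P) i = ε i * (((g i : ℤ) - q i) + e t i) := by
          simp only [Pi.sub_apply, hFdef, hPi i]
          ring
        rw [this, abs_mul, hεabs, one_mul]
        calc |((g i : ℤ) - q i) + e t i| ≤ |(g i : ℤ) - q i| + |(e t i : ℤ)| := abs_add_le _ _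
          _ = |(g i : ℤ) - q i| + e t i := by rw [Int.abs_natCast]
      calc ∑ i, |(F t - P) i| ≤ ∑ i, (|(g i : ℤ) - (q i : ℤ)| + (e t i : ℤ)) :=
            Finset.sum_le_sum fun i _ => hterm i
        _ = |((x - M : ℕ) : ℤ) - r| + M := by
            rw [Finset.sum_add_distrib, hgabs, ← Nat.cast_sum, hesum t ht]
        _ ≤ (y : ℤ) := by
            rcases abs_cases (((x - M : ℕ) : ℤ) - r) with ⟨heq, -⟩ | ⟨heq, -⟩ <;>
              rw [heq] <;> push_cast <;> omega
  have hinj : Set.InjOn F T := by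
    intro t1 ht1 t2 ht2 hfe
    funext i
    have h := congrFun hfe i.castSucc
    simp only [hFdef, hedef, Fin.snoc_castSucc] at h
    have := mul_left_cancel₀ (hεne i.castSucc) h
    omega
  have hfin : (sphere1 (0 : Pt (k + 1)) (x : ℤ) ∩ ball1 P (y : ℤ)).Finite := by
    apply Set.Finite.subset
      ((Fintype.piFinset fun _ : Fin (k + 1) => Finset.Icc (-(x : ℤ)) (x : ℤ)).finite_toSet)
    intro z hz
    have hz1 : norm1 (z - 0) = (x : ℤ) := hz.1
    rw [sub_zero] at hz1
    simp only [Finset.coe_sort_coe, Finset.mem_coe, Fintype.mem_piFinset, Finset.mem_Icc]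
    intro i
    have : |z i| ≤ (x : ℤ) := by
      rw [← hz1]
      exact Finset.single_le_sum (fun j _ => abs_nonneg (z j)) (Finset.mem_univ i)
    constructor <;> [linarith [neg_abs_le (z i)]; linarith [le_abs_self (z i)]]
  have hcardle : T.card ≤ (sphere1 (0 : Pt (k + 1)) (x : ℤ) ∩ ball1 P (y : ℤ)).ncard := by
    calc T.card = (T.image F).card := (Finset.card_image_of_injOn hinj).symm
      _ = ((T.image F : Set (Pt (k + 1)))).ncard := (Set.ncard_coe_finset _).symm
      _ ≤ _ := by
          apply Set.ncard_le_ncard _ hfin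
          intro z hz
          simp only [Finset.coe_image, Set.mem_image, Finset.mem_coe] at hz
          obtain ⟨t, ht, rfl⟩ := hz
          exact hmem t ht
  have hchoose : (M + k).choose k ≤ T.card := card_simplex k M
  -- final arithmetic
  have hk1 : (k + 1) - 1 = k := by omega
  rw [hk1]
  have hfac : (0 : ℝ) < (k.factorial : ℝ) := by positivity
  set L : ℝ := (((x : ℝ) + (y : ℝ) - (r : ℝ)) / 2 - ((k + 1 : ℕ) : ℝ)) with hLdef
  have hL0 : 0 ≤ L := by
    simp only [hLdef]
    have h0 : ((2 * (k + 1) + r : ℕ) : ℝ) ≤ ((x + y : ℕ) : ℝ) := Nat.cast_le.2 h₄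
    push_cast at h0 ⊢
    linarith
  have hLM : L ≤ (M : ℝ) + 1 := by
    simp only [hLdef]
    have : ((x + y : ℕ) : ℝ) ≤ ((2 * M + r + 2 * (k + 1) + 1 : ℕ) : ℝ) := by exact_mod_cast hM2
    push_cast at this ⊢
    linarith
  have hpow : L ^ k ≤ ((M : ℝ) + 1) ^ k := pow_le_pow_left₀ hL0 hLM k
  have hpow2 : ((M : ℝ) + 1) ^ k ≤ (k.factorial : ℝ) * ((M + k).choose k : ℝ) := by
    have hnat : (M + 1) ^ k ≤ k.factorial * (M + k).choose k := by
      calc (M + 1) ^ k ≤ (M + 1).ascFactorial k := Nat.pow_succ_le_ascFactorial (M + 1) k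
        _ = k.factorial * (M + k).choose k := Nat.ascFactorial_eq_factorial_mul_choose M k
    exact_mod_cast hnat
  have hfinal : (((M + k).choose k : ℕ) : ℝ) ≤
      ((sphere1 (0 : Pt (k + 1)) (x : ℤ) ∩ ball1 P (y : ℤ)).ncard : ℝ) := by
    exact_mod_cast le_trans hchoose hcardle
  calc (1 / (k.factorial : ℝ)) * L ^ k
      ≤ (1 / (k.factorial : ℝ)) * ((k.factorial : ℝ) * ((M + k).choose k : ℝ)) := by
        apply mul_le_mul_of_nonneg_left (le_trans hpow hpow2) (by positivity)
    _ = (((M + k).choose k : ℕ) : ℝ) := by field_simp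
    _ ≤ _ := hfinal
end
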